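/- arXiv:2302.02120 — 8 statements merged into one kernel-verified Lean document; each statement's English description precedes it below -/
import Mathlib

section
/- If h₁, h₂, g : ℝ → ℝ are orientation-preserving homeomorphisms of ℝ such that all difference quotients (h(a)-h(b))/(a-b) of h₁ and h₂ lie in (1 - ε/4, 1 + ε/4) and all difference quotients of g lie in (1 - ε/4, 1 + ε/4), where 0 < ε < 4/5, then the composition h₁ ∘ h₂⁻¹ ∘ g has all difference quotients in (1 - ε, 1 + ε). -/
open Set Filter Metric Topology

/-- A continuous flow on `M`. -/
def IsFlow {M : Type*} [TopologicalSpace M] (φ : ℝ × M → M) : Prop :=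
  Continuous φ ∧ (∀ x, φ (0, x) = x) ∧ ∀ s t x, φ (s + t, x) = φ (s, φ (t, x))

/-- Orientation preserving homeomorphism of `ℝ`. -/
def IsRep (f : ℝ → ℝ) : Prop :=
  Continuous f ∧ Function.Bijective f ∧ StrictMono f

/-- Element of `Rep(ε)`: all difference quotients within `ε` of `1`. -/
def IsRepE (ε : ℝ) (f : ℝ → ℝ) : Prop :=
  IsRep f ∧ ∀ a b : ℝ, b < a → |(f a - f b) / (a - b) - 1| < ε

/-- A `d`-pseudotrajectory of the flow `φ`. -/
def IsPseudo {M : Type*} [PseudoMetricSpace M] (φ : ℝ × M → M) (d : ℝ) (ξ : ℝ → M) : Prop :=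
  ∀ t : ℝ, ∀ s ∈ Set.Icc (0:ℝ) 1, dist (ξ (t + s)) (φ (s, ξ t)) < d

/-- The standard shadowing property. -/
def StandardShadowing {M : Type*} [PseudoMetricSpace M] (φ : ℝ × M → M) : Prop :=
  ∀ ε > 0, ∃ d > 0, ∀ ξ : ℝ → M, IsPseudo φ d ξ →
    ∃ x : M, ∃ h : ℝ → ℝ, IsRepE ε h ∧ ∀ t, dist (ξ t) (φ (h t, x)) < ε

/-- The oriented shadowing property. -/
def OrientedShadowing {M : Type*} [PseudoMetricSpace M] (φ : ℝ × M → M) : Prop :=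
  ∀ ε > 0, ∃ d > 0, ∀ ξ : ℝ → M, IsPseudo φ d ξ →
    ∃ x : M, ∃ h : ℝ → ℝ, IsRep h ∧ ∀ t, dist (ξ t) (φ (h t, x)) < ε

/-- A singularity (fixed point) of the flow. -/
def IsSingularity {M : Type*} (φ : ℝ × M → M) (p : M) : Prop :=
  ∀ t : ℝ, φ (t, p) = p

/-- A closed (periodic, non-fixed) orbit of the flow. -/
def IsClosedOrbit {M : Type*} (φ : ℝ × M → M) (Λ : Set M) : Prop :=
  ∃ (x₀ : M) (T : ℝ), 0 < T ∧ φ (T, x₀) = x₀ ∧ (∀ t ∈ Set.Ioo 0 T, φ (t, x₀) ≠ x₀) ∧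
    Λ = Set.range (fun t : ℝ => φ (t, x₀))

/-- A critical element: a singularity or a closed orbit. -/
def IsCriticalElement {M : Type*} (φ : ℝ × M → M) (Λ : Set M) : Prop :=
  (∃ p, IsSingularity φ p ∧ Λ = {p}) ∨ IsClosedOrbit φ Λ

/-- A nonwandering point of the flow. -/
def IsNonWandering {M : Type*} [TopologicalSpace M] (φ : ℝ × M → M) (x : M) : Prop :=
  ∀ V : Set M, IsOpen V → x ∈ V → ∀ T > 0, ∃ t > T, ∃ y ∈ V, φ (t, y) ∈ V

/-- The ω-limit set of a point. -/
def OmegaLim {M : Type*} [PseudoMetricSpace M] (φ : ℝ × M → M) (x : M) : Set M :=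
  {y | ∀ ε > 0, ∀ T : ℝ, ∃ t > T, dist (φ (t, x)) y < ε}

/-- The α-limit set of a point. -/
def AlphaLim {M : Type*} [PseudoMetricSpace M] (φ : ℝ × M → M) (x : M) : Set M :=
  {y | ∀ ε > 0, ∀ T : ℝ, ∃ t < T, dist (φ (t, x)) y < ε}

/-- Asymptotic stability of a compact invariant set `K`. -/
def IsAsympStable {M : Type*} [MetricSpace M] (φ : ℝ × M → M) (K : Set M) : Prop :=
  ∀ V : Set M, IsOpen V → K ⊆ V → ∃ U : Set M, IsOpen U ∧ K ⊆ U ∧ ∀ x ∈ U,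
    (∀ t ≥ (0:ℝ), φ (t, x) ∈ V) ∧
    Tendsto (fun t => Metric.infDist (φ (t, x)) K) atTop (nhds 0)

/-- Backward asymptotic stability of a compact invariant set `K`. -/
def IsBackAsympStable {M : Type*} [MetricSpace M] (φ : ℝ × M → M) (K : Set M) : Prop :=
  ∀ V : Set M, IsOpen V → K ⊆ V → ∃ U : Set M, IsOpen U ∧ K ⊆ U ∧ ∀ x ∈ U,
    (∀ t ≤ (0:ℝ), φ (t, x) ∈ V) ∧
    Tendsto (fun t => Metric.infDist (φ (t, x)) K) atBot (nhds 0)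

/-! Write `w = h₂⁻¹ (g a)` and `z = h₂⁻¹ (g b)`. Since `h₂ w - h₂ z = g a - g b`, the difference
quotient of `h₁ ∘ h₂⁻¹ ∘ g` over `[b, a]` is the quotient of `h₁` over `[z, w]`, divided by that of
`h₂` over `[z, w]`, times that of `g` over `[b, a]`. With `δ = ε / 4` it therefore lies between
`(1 - δ)² / (1 + δ) ≥ 1 - 4δ` and `(1 + δ)² / (1 - δ) ≤ 1 + 4δ`; the last inequality is where
`δ ≤ 1/5` is needed. -/

lemma abs_div_mul_sub_one_lt {δ q₁ q₂ q₃ : ℝ} (hδ : δ ≤ 1 / 5)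
    (hq₁ : |q₁ - 1| < δ) (hq₂ : |q₂ - 1| < δ) (hq₃ : |q₃ - 1| < δ) :
    |q₁ / q₂ * q₃ - 1| < 4 * δ := by
  rw [abs_lt] at hq₁ hq₂ hq₃ ⊢
  have hq₂_pos : 0 < q₂ := by linarith
  have hupper : q₁ * q₃ < (1 + 4 * δ) * q₂ := by nlinarith
  have hlower : (1 - 4 * δ) * q₂ < q₁ * q₃ := by nlinarith
  rw [div_mul_eq_mul_div]
  constructor
  · linarith [(lt_div_iff₀ hq₂_pos).mpr hlower]
  · linarith [(div_lt_iff₀ hq₂_pos).mpr hupper]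

lemma IsRep.comp {f g : ℝ → ℝ} (hf : IsRep f) (hg : IsRep g) : IsRep (f ∘ g) :=
  ⟨hf.1.comp hg.1, hf.2.1.comp hg.2.1, hf.2.2.comp hg.2.2⟩

lemma IsRep.of_rightInverse {f k : ℝ → ℝ} (hf : IsRep f) (hk : Function.RightInverse k f) :
    IsRep k := by
  have hk_left : Function.LeftInverse k f := hk.leftInverse_of_injective hf.2.1.injective
  have hk_mono : StrictMono k := fun a b hab => by
    rwa [← hf.2.2.lt_iff_lt, hk a, hk b]
  exact ⟨hk_mono.monotone.continuous_of_surjective hk_left.surjective,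
    Function.bijective_iff_has_inverse.mpr ⟨f, hk, hk_left⟩, hk_mono⟩

theorem rep_comp_general (ε : ℝ) (hε' : ε < 4 / 5)
    (h₁ h₂ g h₂inv : ℝ → ℝ)
    (hh₁ : IsRepE (ε / 4) h₁) (hh₂ : IsRepE (ε / 4) h₂) (hg : IsRepE (ε / 4) g)
    (hinv₁ : ∀ x, h₂ (h₂inv x) = x) :
    IsRepE ε (h₁ ∘ h₂inv ∘ g) := by
  have hinv : IsRep h₂inv := hh₂.1.of_rightInverse hinv₁
  refine ⟨hh₁.1.comp (hinv.comp hg.1), fun a b hab => ?_⟩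
  have hgab : g b < g a := hg.1.2.2 hab
  have hzw : h₂inv (g b) < h₂inv (g a) := hinv.2.2 hgab
  have hq₂ := hh₂.2 _ _ hzw
  rw [hinv₁, hinv₁] at hq₂
  rw [Function.comp_apply, Function.comp_apply, ← div_mul_div_cancel₀ (sub_ne_zero.mpr hgab.ne'),
    ← div_div_div_cancel_right₀ (sub_ne_zero.mpr hzw.ne')]
  calc _ < 4 * (ε / 4) := abs_div_mul_sub_one_lt (by linarith) (hh₁.2 _ _ hzw) hq₂ (hg.2 a b hab)
    _ = ε := by ring

/-- composition of reparametrizations. -/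
theorem rep_comp (ε : ℝ) (hε : 0 < ε) (hε' : ε < 4 / 5)
    (h₁ h₂ g h₂inv : ℝ → ℝ)
    (hh₁ : IsRepE (ε / 4) h₁) (hh₂ : IsRepE (ε / 4) h₂) (hg : IsRepE (ε / 4) g)
    (hinv₁ : ∀ x, h₂ (h₂inv x) = x) (hinv₂ : ∀ x, h₂inv (h₂ x) = x) :
    IsRepE ε (h₁ ∘ h₂inv ∘ g) :=
  rep_comp_general ε hε' h₁ h₂ g h₂inv hh₁ hh₂ hg hinv₁
end

section
/- Let φ be a continuous flow on a compact metric space M and let U be an open set containing the nonwandering set Ω(φ). Then there exists R > 0 such that for every x ∈ M, if φ(t,x) ∉ U for all t ∈ (0, ℓ), then ℓ < R. (Birkhoff constant theorem for flows.) -/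
open Set Filter Metric Topology

/-- Birkhoff constant theorem for flows. -/
theorem birkhoff_constant {M : Type*} [MetricSpace M] [CompactSpace M]
    (φ : ℝ × M → M) (hφ : IsFlow φ)
    (U : Set M) (hU : IsOpen U) (hΩ : {x | IsNonWandering φ x} ⊆ U) :
    ∃ R > 0, ∀ (x : M) (ℓ : ℝ), (∀ t ∈ Set.Ioo (0:ℝ) ℓ, φ (t, x) ∉ U) → ℓ < R := by
  by_contra hcon
  push_neg at hcon
  -- For each n, get a point whose orbit avoids U on (0, ℓₙ) with ℓₙ ≥ 2(n+1)
  have hc : ∀ n : ℕ, ∃ x : M, ∀ t : ℝ, |t| < (n:ℝ) + 1 → φ (t, φ ((n:ℝ) + 1, x)) ∉ U := by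
    intro n
    obtain ⟨x, ℓ, havoid, hℓ⟩ := hcon (2 * ((n:ℝ) + 1)) (by positivity)
    refine ⟨x, fun t ht hmem => ?_⟩
    rw [← hφ.2.2 t ((n:ℝ) + 1) x] at hmem
    refine havoid (t + ((n:ℝ) + 1)) ⟨?_, ?_⟩ hmem
    · have := neg_lt_of_abs_lt ht; linarith
    · have := lt_of_abs_lt ht; linarith
  choose x hx using hc
  -- compactness: a subsequence of zₙ := φ(n+1, xₙ) converges to z
  obtain ⟨z, -, ψ, hψ, hz⟩ := isCompact_univ.tendsto_subseq
    (fun n : ℕ => mem_univ (φ ((n:ℝ) + 1, x n)))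
  -- the whole orbit of z avoids U
  have hzU : ∀ t : ℝ, φ (t, z) ∉ U := by
    intro t
    have hcont : Tendsto (fun k : ℕ => φ (t, φ ((ψ k : ℝ) + 1, x (ψ k)))) atTop
        (nhds (φ (t, z))) :=
      ((hφ.1.comp (continuous_const.prodMk continuous_id)).continuousAt.tendsto).comp hz
    have hev : ∀ᶠ k : ℕ in atTop, φ (t, φ ((ψ k : ℝ) + 1, x (ψ k))) ∈ Uᶜ := by
      filter_upwards [eventually_ge_atTop ⌈|t|⌉₊] with k hk
      refine hx (ψ k) t ?_
      have h1 : (k : ℝ) ≤ ψ k := by exact_mod_cast hψ.le_apply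
      have h2 : |t| ≤ (⌈|t|⌉₊ : ℝ) := Nat.le_ceil _
      have h3 : (⌈|t|⌉₊ : ℝ) ≤ k := by exact_mod_cast hk
      linarith
    exact hU.isClosed_compl.mem_of_tendsto hcont hev
  -- take a limit point w of φ(m, z), m → ∞
  obtain ⟨w, -, χ, hχ, hw⟩ := isCompact_univ.tendsto_subseq
    (fun m : ℕ => mem_univ (φ ((m:ℝ), z)))
  have hwU : w ∉ U := by
    refine hU.isClosed_compl.mem_of_tendsto hw (Eventually.of_forall fun m => ?_)
    exact hzU _
  -- w is nonwandering
  have hadd : ∀ n k : ℕ, χ n + k ≤ χ (n + k) := by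
    intro n k
    induction k with
    | zero => simp
    | succ k ih => show χ n + (k + 1) ≤ χ (n + k + 1); have h : χ (n + k) < χ (n + k + 1) := hχ (by omega); omega
  have hwnw : IsNonWandering φ w := by
    intro V hV hwV T hT
    have hev : ∀ᶠ m : ℕ in atTop, φ ((χ m : ℝ), z) ∈ V :=
      hw (hV.mem_nhds hwV)
    obtain ⟨N, hN⟩ := eventually_atTop.1 hev
    set m₂ := N + (⌈T⌉₊ + 1) with hm₂
    refine ⟨(χ m₂ : ℝ) - (χ N : ℝ), ?_, φ ((χ N : ℝ), z), hN N le_rfl, ?_⟩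
    · have h1 : χ N + (⌈T⌉₊ + 1) ≤ χ m₂ := hadd N _
      have h2 : T ≤ (⌈T⌉₊ : ℝ) := Nat.le_ceil _
      have h3 : (χ N : ℝ) + (⌈T⌉₊ + 1 : ℕ) ≤ (χ m₂ : ℝ) := by exact_mod_cast h1
      push_cast at h3
      linarith
    · rw [← hφ.2.2]
      have : (χ m₂ : ℝ) - (χ N : ℝ) + (χ N : ℝ) = (χ m₂ : ℝ) := by ring
      rw [this]
      exact hN m₂ (Nat.le_add_right _ _)
  exact hwU (hΩ hwnw)
end

section
/- Let φ be a continuous flow on a compact metric space and let K be an asymptotically stable φ-invariant compact set. Then there exist d > 0 and a neighborhood U of K such that every d-pseudotrajectory ξ with ξ(t₀) ∈ U for some t₀ satisfies ξ(t) ∈ B(ε₀/2, K) for all t ≥ t₀, where ε₀ > 0 is any prescribed constant with B(ε₀, K) contained in the basin of attraction. -/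
open Set Filter Metric Topology

/-- pseudotrajectories near an asymptotically stable compact set. -/
theorem pseudo_near_asymp_stable {M : Type*} [MetricSpace M] [CompactSpace M]
    (φ : ℝ × M → M) (hφ : IsFlow φ)
    (K : Set M) (hKc : IsCompact K) (hKinv : ∀ t x, x ∈ K → φ (t, x) ∈ K)
    (hK : IsAsympStable φ K)
    (ε₀ : ℝ) (hε₀ : 0 < ε₀)
    (hbasin : ∀ x ∈ Metric.thickening ε₀ K,
      Tendsto (fun t => Metric.infDist (φ (t, x)) K) atTop (nhds 0)) :
    ∃ d > 0, ∃ U : Set M, IsOpen U ∧ K ⊆ U ∧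
      ∀ ξ : ℝ → M, IsPseudo φ d ξ → ∀ t₀ : ℝ, ξ t₀ ∈ U →
        ∀ t ≥ t₀, ξ t ∈ Metric.thickening (ε₀ / 2) K := by
    classical
  rcases K.eq_empty_or_nonempty with hKe | hKne
  · refine ⟨1, one_pos, ∅, isOpen_empty, by simp [hKe], ?_⟩
    intro ξ _ t₀ h
    exact absurd h (Set.notMem_empty _)
  obtain ⟨hcont, hzero, hadd⟩ := hφ
  -- uniform continuity modulus
  have key : ∀ η : ℝ, 0 < η → ∃ δ : ℝ, 0 < δ ∧ δ ≤ η / 2 ∧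
      ∀ s ∈ Set.Icc (0:ℝ) 1, ∀ x y : M, dist x y < δ → dist (φ (s, x)) (φ (s, y)) < η / 2 := by
    intro η hη
    have : CompactSpace (Set.Icc (0:ℝ) 1) := isCompact_iff_compactSpace.mp isCompact_Icc
    have hcomp : UniformContinuous (fun p : Set.Icc (0:ℝ) 1 × M => φ ((p.1 : ℝ), p.2)) :=
      CompactSpace.uniformContinuous_of_continuous
        (hcont.comp ((continuous_subtype_val.comp continuous_fst).prodMk continuous_snd))
    rw [Metric.uniformContinuous_iff] at hcomp
    obtain ⟨δ, hδ, hδ2⟩ := hcomp (η/2) (by linarith)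
    refine ⟨min δ (η/2), by positivity, min_le_right _ _, ?_⟩
    intro s hs x y hxy
    have hd : dist ((⟨s, hs⟩, x) : Set.Icc (0:ℝ) 1 × M) (⟨s, hs⟩, y) < δ := by
      rw [Prod.dist_eq]
      simp only [Subtype.dist_eq, dist_self]
      exact lt_of_le_of_lt (max_le (le_trans dist_nonneg le_rfl) le_rfl)
        (lt_of_lt_of_le hxy (min_le_left _ _))
    exact hδ2 hd
  have key' : ∀ η : ℝ, ∃ δ : ℝ, 0 < δ ∧ (0 < η → δ ≤ η / 2 ∧
      ∀ s ∈ Set.Icc (0:ℝ) 1, ∀ x y : M, dist x y < δ → dist (φ (s, x)) (φ (s, y)) < η / 2) := by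
    intro η
    by_cases hη : 0 < η
    · obtain ⟨δ, h1, h2, h3⟩ := key η hη; exact ⟨δ, h1, fun _ => ⟨h2, h3⟩⟩
    · exact ⟨1, one_pos, fun h => absurd h hη⟩
  choose F hFpos hFspec using key'
  -- stability neighborhoods
  obtain ⟨U₁, hU₁o, hKU₁, hU₁⟩ := hK (Metric.thickening (ε₀/4) K) Metric.isOpen_thickening
    (Metric.self_subset_thickening (by linarith) K)
  obtain ⟨a₀, ha₀, ha₀sub⟩ := hKc.exists_thickening_subset_open hU₁o hKU₁
  set a := min a₀ (ε₀/4) with ha_def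
  have ha : 0 < a := lt_min ha₀ (by linarith)
  have haε : a ≤ ε₀/4 := min_le_right _ _
  have hasub : Metric.thickening a K ⊆ U₁ :=
    (Metric.thickening_mono (min_le_left _ _) K).trans ha₀sub
  obtain ⟨U₂, hU₂o, hKU₂, hU₂⟩ := hK (Metric.thickening (a/2) K) Metric.isOpen_thickening
    (Metric.self_subset_thickening (by positivity) K)
  obtain ⟨c₀, hc₀, hc₀sub⟩ := hKc.exists_thickening_subset_open hU₂o hKU₂
  -- uniform attraction time
  set C := Metric.cthickening a K with hC_def
  have hCcomp : IsCompact C := Metric.isClosed_cthickening.isCompact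
  have hCbasin : C ⊆ Metric.thickening ε₀ K :=
    Metric.cthickening_subset_thickening' hε₀ (by linarith) K
  have hτ : ∀ x ∈ C, ∃ t : ℝ, 0 ≤ t ∧ φ (t, x) ∈ U₂ := by
    intro x hx
    have h2 : ∀ᶠ t in atTop, Metric.infDist (φ (t, x)) K < c₀ :=
      (hbasin x (hCbasin hx)).eventually_lt_const hc₀
    obtain ⟨t, ht1, ht2⟩ := (h2.and (eventually_ge_atTop (0:ℝ))).exists
    exact ⟨t, ht2, hc₀sub ((Metric.mem_thickening_iff_infDist_lt hKne).mpr ht1)⟩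
  choose! τ hτ0 hτU using hτ
  have hWopen : ∀ x : M, IsOpen ((fun y => φ (τ x, y)) ⁻¹' U₂) := fun x =>
    hU₂o.preimage (hcont.comp (continuous_const.prodMk continuous_id))
  obtain ⟨tf, htfC, htfcov⟩ := hCcomp.elim_nhds_subcover (fun x => (fun y => φ (τ x, y)) ⁻¹' U₂)
    (fun x hx => (hWopen x).mem_nhds (hτU x hx))
  set N : ℕ := (tf.sup fun x => ⌈τ x⌉₊) + 1 with hN_def
  have hN1 : 1 ≤ N := Nat.le_add_left 1 _
  have hNstep : ∀ y ∈ Metric.thickening a K, φ ((N:ℝ), y) ∈ Metric.thickening (a/2) K := by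
    intro y hy
    have hyC : y ∈ C := Metric.thickening_subset_cthickening a K hy
    obtain ⟨x, hxtf, hyW⟩ := Set.mem_iUnion₂.mp (htfcov hyC)
    have hτx : τ x ≤ (N:ℝ) := by
      calc τ x ≤ (⌈τ x⌉₊ : ℝ) := Nat.le_ceil _
        _ ≤ (N:ℝ) := by
            have : ⌈τ x⌉₊ ≤ N := by
              have h1 : ⌈τ x⌉₊ ≤ tf.sup fun z => ⌈τ z⌉₊ :=
                Finset.le_sup (f := fun z => ⌈τ z⌉₊) hxtf
              rw [hN_def]; exact le_trans h1 (Nat.le_add_right _ 1)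
            exact_mod_cast this
    have heq : φ ((N:ℝ), y) = φ ((N:ℝ) - τ x, φ (τ x, y)) := by
      rw [← hadd]; ring_nf
    rw [heq]
    exact (hU₂ _ hyW).1 _ (by linarith)
  -- the modulus sequence
  set δs : ℕ → ℝ := fun n => F^[n] (a/2) with hδs_def
  have hδs0 : δs 0 = a/2 := rfl
  have hδsucc : ∀ n, δs (n+1) = F (δs n) := by
    intro n; simp only [hδs_def, Function.iterate_succ_apply']
  have hδpos : ∀ n, 0 < δs n := by
    intro n
    induction n with
    | zero => rw [hδs0]; positivity
    | succ n ih => rw [hδsucc]; exact hFpos _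
  have hδhalf : ∀ n, δs (n+1) ≤ δs n / 2 := fun n => by
    rw [hδsucc]; exact (hFspec (δs n) (hδpos n)).1
  have hδanti : Antitone δs := antitone_nat_of_succ_le fun n =>
    le_trans (hδhalf n) (by linarith [hδpos n])
  have hδtop : ∀ n, δs n ≤ a/2 := fun n => by
    simpa [hδs0] using hδanti (Nat.zero_le n)
  set d : ℝ := δs N / 2 with hd_def
  have hdpos : 0 < d := by have := hδpos N; positivity
  have hda : d ≤ a/4 := by have := hδtop N; rw [hd_def]; linarith
  refine ⟨d, hdpos, Metric.thickening a K, Metric.isOpen_thickening,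
    Metric.self_subset_thickening ha K, ?_⟩
  intro ξ hξ t₀ ht₀ t ht
  -- k-step tracking
  have track : ∀ τ' : ℝ, ∀ k : ℕ, k ≤ N →
      dist (ξ (τ' + k)) (φ ((k:ℝ), ξ τ')) < δs (N - k) := by
    intro τ' k hk
    induction k with
    | zero => simpa [hzero] using hδpos N
    | succ k ih =>
      have hkN : k < N := hk
      have ihk := ih (le_of_lt hkN)
      have hNk : N - k = (N - (k+1)) + 1 := by omega
      have hdk : d ≤ δs (N - (k+1)) / 2 := by
        have := hδanti (Nat.sub_le N (k+1))
        rw [hd_def]; linarith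
      have h1 : dist (ξ (τ' + ((k:ℕ)+1:ℝ))) (φ (1, ξ (τ' + k))) < d := by
        have := hξ (τ' + k) 1 ⟨zero_le_one, le_refl 1⟩
        have he : τ' + ((k:ℕ)+1:ℝ) = τ' + (k:ℝ) + 1 := by ring
        rw [he]; exact this
      have h2 : dist (φ (1, ξ (τ' + k))) (φ (1, φ ((k:ℝ), ξ τ'))) < δs (N - (k+1)) / 2 := by
        have hmem : dist (ξ (τ' + k)) (φ ((k:ℝ), ξ τ')) < F (δs (N - (k+1))) := by
          rw [← hδsucc, ← hNk]; exact ihk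
        exact (hFspec (δs (N - (k+1))) (hδpos _)).2 1
          ⟨zero_le_one, le_refl 1⟩ _ _ hmem
      have h3 : φ (1, φ ((k:ℝ), ξ τ')) = φ (((k:ℕ)+1:ℝ), ξ τ') := by
        rw [← hadd]; norm_num [add_comm]
      have hcast : ((k+1 : ℕ):ℝ) = (k:ℝ) + 1 := by push_cast; ring
      rw [hcast]
      calc dist (ξ (τ' + ((k:ℝ)+1))) (φ ((k:ℝ)+1, ξ τ'))
          ≤ dist (ξ (τ' + ((k:ℝ)+1))) (φ (1, ξ (τ' + k)))
            + dist (φ (1, ξ (τ' + k))) (φ ((k:ℝ)+1, ξ τ')) := dist_triangle _ _ _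
        _ < d + δs (N - (k+1)) / 2 := by rw [← h3]; exact add_lt_add h1 h2
        _ ≤ δs (N - (k+1)) := by linarith
  -- induction: ξ stays near K at multiples of N
  have hInd : ∀ m : ℕ, ξ (t₀ + m * N) ∈ Metric.thickening a K := by
    intro m
    induction m with
    | zero => simpa using ht₀
    | succ m ih =>
      have htr := track (t₀ + m * N) N le_rfl
      rw [Nat.sub_self, hδs0] at htr
      have hφN := hNstep _ ih
      rw [Metric.mem_thickening_iff_infDist_lt hKne] at hφN ⊢
      have hle : Metric.infDist (ξ (t₀ + m * N + N)) K ≤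
          Metric.infDist (φ ((N:ℝ), ξ (t₀ + m * N))) K
          + dist (ξ (t₀ + m * N + N)) (φ ((N:ℝ), ξ (t₀ + m * N))) :=
        Metric.infDist_le_infDist_add_dist
      have he : t₀ + ((m:ℕ)+1 : ℕ) * (N:ℝ) = t₀ + m * N + N := by push_cast; ring
      rw [he]
      linarith
  -- decompose t
  have hNR : (0:ℝ) < (N:ℝ) := by exact_mod_cast hN1
  set r : ℝ := t - t₀ with hr_def
  have hr0 : 0 ≤ r := by linarith
  set m : ℕ := ⌊r / N⌋₊ with hm_def
  have hm1 : (m:ℝ) * N ≤ r := by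
    have := Nat.floor_le (div_nonneg hr0 (le_of_lt hNR))
    calc (m:ℝ) * N ≤ (r / N) * N := by
          apply mul_le_mul_of_nonneg_right this (le_of_lt hNR)
      _ = r := by field_simp
  have hm2 : r < ((m:ℝ) + 1) * N := by
    have := Nat.lt_floor_add_one (r / N)
    calc r = (r / N) * N := by field_simp
      _ < ((m:ℝ) + 1) * N := by
          apply mul_lt_mul_of_pos_right this hNR
  set r' : ℝ := r - m * N with hr'_def
  have hr'0 : 0 ≤ r' := by rw [hr'_def]; linarith
  have hr'N : r' < N := by rw [hr'_def]; nlinarith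
  set k : ℕ := ⌊r'⌋₊ with hk_def
  have hk1 : (k:ℝ) ≤ r' := Nat.floor_le hr'0
  have hk2 : r' < (k:ℝ) + 1 := Nat.lt_floor_add_one r'
  have hkN : k < N := by
    have : (k:ℝ) < (N:ℝ) := lt_of_le_of_lt hk1 hr'N
    exact_mod_cast this
  set s : ℝ := r' - k with hs_def
  have hs0 : 0 ≤ s := by rw [hs_def]; linarith
  have hs1 : s ≤ 1 := by rw [hs_def]; linarith
  set τ' : ℝ := t₀ + m * N with hτ'_def
  have hteq : t = τ' + k + s := by rw [hτ'_def, hs_def, hr'_def, hr_def]; ring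
  set y : M := ξ τ' with hy_def
  have hyA : y ∈ Metric.thickening a K := hInd m
  -- bound dist (ξ t) (φ (s + k, y))
  have htr := track τ' k (le_of_lt hkN)
  have hNk : N - k = (N - (k+1)) + 1 := by omega
  have h1 : dist (ξ (τ' + k + s)) (φ (s, ξ (τ' + k))) < d := hξ (τ' + k) s ⟨hs0, hs1⟩
  have h2 : dist (φ (s, ξ (τ' + k))) (φ (s, φ ((k:ℝ), y))) < δs (N - (k+1)) / 2 := by
    have hmem : dist (ξ (τ' + k)) (φ ((k:ℝ), y)) < F (δs (N - (k+1))) := by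
      rw [← hδsucc, ← hNk]; exact htr
    exact (hFspec (δs (N - (k+1))) (hδpos _)).2 s ⟨hs0, hs1⟩ _ _ hmem
  have h3 : φ (s, φ ((k:ℝ), y)) = φ (s + k, y) := (hadd s (k:ℝ) y).symm
  have hφmem : φ (s + k, y) ∈ Metric.thickening (ε₀/4) K :=
    (hU₁ y (hasub hyA)).1 (s + k) (by positivity)
  have hδk : δs (N - (k+1)) / 2 ≤ a / 4 := by
    have := hδtop (N - (k+1)); linarith
  rw [Metric.mem_thickening_iff_infDist_lt hKne] at hφmem ⊢
  have hle : Metric.infDist (ξ t) K ≤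
      Metric.infDist (φ (s + k, y)) K + dist (ξ t) (φ (s + k, y)) :=
    Metric.infDist_le_infDist_add_dist
  have hdist : dist (ξ t) (φ (s + k, y)) < d + δs (N - (k+1)) / 2 := by
    rw [hteq, ← h3]
    calc dist (ξ (τ' + k + s)) (φ (s, φ ((k:ℝ), y)))
        ≤ dist (ξ (τ' + k + s)) (φ (s, ξ (τ' + k)))
          + dist (φ (s, ξ (τ' + k))) (φ (s, φ ((k:ℝ), y))) := dist_triangle _ _ _
      _ < d + δs (N - (k+1)) / 2 := add_lt_add h1 h2
  linarith
end

section
/- Let φ be a continuous flow on a compact metric space M with the oriented shadowing property, and suppose p is a singularity such that there exists x₀ ≠ p with α(x₀) = ω(x₀) = {p} and such that every point x in the open region U bounded by the closed curve Orb(x₀) ∪ {p} (in a surface) has its full orbit contained in U with α(x) = ω(x) = {p}. Then a contradiction follows; i.e., no such homoclinic configuration where all interior orbits are homoclinic to p can occur for a flow with the oriented shadowing property. -/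
open Set Filter Metric Topology

/-- no homoclinic region all of whose interior orbits are homoclinic to `p`,
for a flow with the oriented shadowing property. -/
theorem no_homoclinic_region {M : Type*} [MetricSpace M] [CompactSpace M]
    (φ : ℝ × M → M) (hφ : IsFlow φ) (hsh : OrientedShadowing φ)
    (p : M) (hp : IsSingularity φ p)
    (x₀ : M) (hx₀ : x₀ ≠ p)
    (hαω₀ : AlphaLim φ x₀ = {p} ∧ OmegaLim φ x₀ = {p})
    (U : Set M) (hUopen : IsOpen U) (hUne : U.Nonempty) (hpU : p ∉ U)
    (hfr : frontier U = Set.range (fun t : ℝ => φ (t, x₀)) ∪ {p})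
    (hU : ∀ x ∈ U, (∀ t : ℝ, φ (t, x) ∈ U) ∧
      AlphaLim φ x = {p} ∧ OmegaLim φ x = {p} ∧
      Tendsto (fun t => φ (t, x)) atTop (nhds p) ∧
      Tendsto (fun t => φ (t, x)) atBot (nhds p)) :
    False := by
  obtain ⟨hcont, hzero, hadd⟩ := hφ
  obtain ⟨x₁, hx₁U⟩ := hUne
  obtain ⟨-, -, -, htop, hbot⟩ := hU x₁ hx₁U
  have hx₁p : x₁ ≠ p := fun h => hpU (h ▸ hx₁U)
  set δ := dist x₁ p with hδ
  have hδpos : 0 < δ := dist_pos.mpr hx₁p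
  obtain ⟨r, hrpos, hrU⟩ := Metric.isOpen_iff.mp hUopen x₁ hx₁U
  set ε := min r (δ / 3) with hε
  have hεpos : 0 < ε := lt_min hrpos (by positivity)
  obtain ⟨d, hdpos, hd⟩ := hsh ε hεpos
  have hd2 : (0:ℝ) < d / 2 := by positivity
  -- choose thresholds from convergence to p
  obtain ⟨A, hA⟩ := (Filter.eventually_atTop).mp
    (htop (Metric.ball_mem_nhds p hd2))
  obtain ⟨B, hB⟩ := (Filter.eventually_atBot).mp
    (hbot (Metric.ball_mem_nhds p hd2))
  set T : ℝ := max A (max (1 - B) 1) with hT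
  have hT1 : (1:ℝ) ≤ T := le_trans (le_max_right _ _) (le_max_right _ _)
  have hTA : A ≤ T := le_max_left _ _
  have hTB : 1 - T ≤ B := by
    have : 1 - B ≤ T := le_trans (le_max_left _ _) (le_max_right _ _)
    linarith
  have hTpos : 0 < T := lt_of_lt_of_le one_pos hT1
  set L : ℝ := 2 * T with hL
  have hLpos : 0 < L := by positivity
  have hbig : ∀ u : ℝ, (T ≤ u ∨ u ≤ 1 - T) → dist (φ (u, x₁)) p < d / 2 := by
    intro u hu
    rcases hu with hu | hu
    · exact hA u (le_trans hTA hu)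
    · exact hB u (le_trans hu hTB)
  -- the periodic pseudotrajectory
  set ξ : ℝ → M := fun t => φ (t - T - L * (⌊t / L⌋ : ℤ), x₁) with hξ
  have hfloor : ∀ k : ℤ, (⌊(T + k * L) / L⌋ : ℤ) = k := by
    intro k
    have : (T + k * L) / L = 1 / 2 + (k : ℝ) := by
      field_simp
      ring
    rw [this]
    rw [Int.floor_add_intCast]
    have : ⌊(1 / 2 : ℝ)⌋ = 0 := by
      rw [Int.floor_eq_zero_iff]
      constructor <;> norm_num
    rw [this]; ring
  have hξx₁ : ∀ k : ℤ, ξ (T + k * L) = x₁ := by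
    intro k
    have h0 : T + k * L - T - L * (⌊(T + k * L) / L⌋ : ℤ) = 0 := by
      rw [hfloor k]; ring
    simp only [hξ]
    rw [h0, hzero]
  have hpseudo : IsPseudo φ d ξ := by
    intro t s hs
    obtain ⟨hs0, hs1⟩ := hs
    set n : ℤ := ⌊t / L⌋ with hn
    set m : ℤ := ⌊(t + s) / L⌋ with hm
    have hnm : n ≤ m := by
      apply Int.floor_le_floor
      gcongr
      linarith

    have hmn1 : m ≤ n + 1 := by
      have ht1 : t / L < n + 1 := Int.lt_floor_add_one _
      have hsL : s / L ≤ 1 := by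
        rw [div_le_one hLpos]
        have : (1:ℝ) ≤ L := by simp only [hL]; linarith
        linarith
      have : (t + s) / L < (n:ℝ) + 2 := by
        rw [add_div]
        push_cast
        linarith
      have := Int.floor_lt.mpr (by push_cast; linarith : (t + s) / L < ((n + 2 : ℤ) : ℝ))
      omega
    have hφs : φ (s, ξ t) = φ (s + (t - T - L * n), x₁) := by
      simp only [hξ]
      rw [hadd]
    rcases eq_or_lt_of_le hnm with heq | hlt
    · -- same block: the two points coincide
      have : ξ (t + s) = φ (s + (t - T - L * n), x₁) := by
        simp only [hξ, ← hm, ← heq]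
        congr 2
        ring
      rw [this, hφs, dist_self]
      exact hdpos
    · -- crossing a jump: both points are near p
      have hm1 : m = n + 1 := le_antisymm hmn1 hlt
      have hts : ((n:ℝ) + 1) * L ≤ t + s := by
        have := Int.floor_le ((t + s) / L)
        rw [← hm] at this
        have h2 : (m : ℝ) * L ≤ t + s := by
          rw [← le_div_iff₀ hLpos]
          exact this
        rw [hm1] at h2
        push_cast at h2
        linarith
      have htlt : t < ((n:ℝ) + 1) * L := by
        have := Int.lt_floor_add_one (t / L)
        rw [← hn] at this
        calc t = t / L * L := by field_simp
        _ < ((n:ℝ) + 1) * L := by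
            apply mul_lt_mul_of_pos_right _ hLpos
            exact this
      set u : ℝ := t + s - T - L * ((n:ℝ) + 1) with hu
      set v : ℝ := s + (t - T - L * n) with hv
      have hξts : ξ (t + s) = φ (u, x₁) := by
        simp only [hξ, ← hm, hm1]
        congr 2
        push_cast
        ring
      have hule : u ≤ 1 - T := by
        have h2 : u = t + s - T - ((n:ℝ) * L + L) := by rw [hu]; ring
        rw [h2]
        linarith
      have hvge : T ≤ v := by
        have h1 : ((n:ℝ) + 1) * L = (n:ℝ) * L + L := by ring
        rw [h1] at hts
        have h2 : v = t + s - T - (n:ℝ) * L := by rw [hv]; ring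
        have h3 : L = 2 * T := hL
        rw [h2]
        linarith
      rw [hξts, hφs]
      calc dist (φ (u, x₁)) (φ (v, x₁))
          ≤ dist (φ (u, x₁)) p + dist p (φ (v, x₁)) := dist_triangle _ _ _
        _ < d / 2 + d / 2 := by
            apply add_lt_add (hbig u (Or.inr hule))
            rw [dist_comm]
            exact hbig v (Or.inl hvge)
        _ = d := by ring
  obtain ⟨x, h, ⟨hhc, hhbij, hhmono⟩, hclose⟩ := hd ξ hpseudo
  -- the shadowing orbit enters U near x₁
  have hclose0 : dist x₁ (φ (h T, x)) < ε := by
    have := hclose T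
    have hT0 : ξ T = x₁ := by
      have := hξx₁ 0
      simpa using this
    rwa [hT0] at this
  set y : M := φ (h T, x) with hy
  have hyU : y ∈ U := by
    apply hrU
    rw [Metric.mem_ball, dist_comm]
    exact lt_of_lt_of_le hclose0 (le_trans (min_le_left _ _) (le_refl r))
  obtain ⟨-, -, -, hytop, -⟩ := hU y hyU
  obtain ⟨C, hC⟩ := (Filter.eventually_atTop).mp
    (hytop (Metric.ball_mem_nhds p (by positivity : (0:ℝ) < δ / 3)))
  -- find a large time on the pseudotrajectory mapped beyond C by h
  obtain ⟨t₀, ht₀⟩ := hhbij.2 (C + h T)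
  set k : ℕ := ⌈(t₀ - T) / L⌉₊ with hk
  have hkL : t₀ ≤ T + (k : ℝ) * L := by
    have h1 : (t₀ - T) / L ≤ (k : ℝ) := Nat.le_ceil _
    have h2 : t₀ - T ≤ (k : ℝ) * L := by
      rw [div_le_iff₀ hLpos] at h1
      linarith
    linarith
  have hmono' : h t₀ ≤ h (T + (k : ℝ) * L) := hhmono.monotone hkL
  set w : ℝ := h (T + (k : ℝ) * L) - h T with hw
  have hwC : C ≤ w := by
    simp only [hw]
    rw [ht₀] at hmono'
    linarith
  have hφw : φ (h (T + (k : ℝ) * L), x) = φ (w, y) := by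
    simp only [hy, hw]
    rw [← hadd]
    congr 1
    ring_nf
  have hclosek : dist x₁ (φ (w, y)) < ε := by
    have := hclose (T + (k : ℝ) * L)
    have hξk : ξ (T + (k : ℝ) * L) = x₁ := by
      have := hξx₁ (k : ℤ)
      push_cast at this
      exact this
    rw [hξk, hφw] at this
    exact this
  have hfar : dist (φ (w, y)) p < δ / 3 := hC w hwC
  have htri : δ ≤ dist x₁ (φ (w, y)) + dist (φ (w, y)) p := dist_triangle _ _ _
  have hεδ : ε ≤ δ / 3 := min_le_right _ _
  linarith
end

section
/- Let X be a Hausdorff topological space and G : [-1,1] → X a surjective continuous map with G(-1) ≠ G(1). Then there exists an injective continuous map j : [-1,1] → X with j(-1) = G(-1) and j(1) = G(1). -/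
/-!
Extend `G` continuously to `f : ℝ → X`. By Zorn's lemma there is a minimal closed `A ⊆ [-1, 1]`
containing `±1` such that `f` agrees at the two ends of every gap of `A`: along a chain, a gap of
the intersection is a limit of gaps of its members, and `f` is continuous into a Hausdorff space.
Minimality means that `f s = f t` for `s < t` in `A` only when `(s, t)` is a gap (otherwise remove
`(s, t)` from `A`), and hence that no point of `A ∩ (-1, 1)` is isolated. Such a set carries an
atomless probability measure charging every open interval that meets `A ∩ (-1, 1)` (push the
coin-tossing measure forward from Cantor sets inside `A`); its distribution function maps `A`
onto `[0, 1]` and identifies two points of `A` exactly when `f` does. As `A` is compact, `f` on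
`A` therefore factors through it as a continuous injection of `[0, 1]` into `X`: the arc.
-/

open Set Filter Metric Topology

open MeasureTheory ProbabilityTheory TopologicalSpace

theorem ENNReal.tprod_const_eq_zero_of_lt_one {c : ENNReal} (hc : c < 1) : ∏' _ : ℕ, c = 0 := by
  rw [ENNReal.tprod_eq_iInf_prod fun _ => hc.le]
  refine le_antisymm (ge_of_tendsto' (ENNReal.tendsto_pow_atTop_nhds_zero_of_lt_one hc)
    fun n => ?_) bot_le
  simpa using iInf_le (fun s : Finset ℕ => ∏ _ ∈ s, c) (Finset.range n)

theorem Perfect.exists_isProbabilityMeasure_nullSingletonClass {α : Type*} [MetricSpace α]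
    [CompleteSpace α] [MeasurableSpace α] [BorelSpace α] {K : Set α} (hK : Perfect K)
    (hne : K.Nonempty) :
    ∃ μ : Measure α, IsProbabilityMeasure μ ∧ NullSingletonClass μ ∧ μ Kᶜ = 0 := by
  obtain ⟨g, hgK, hgc, hgi⟩ := hK.exists_nat_bool_injection hne
  set ν := Measure.infinitePi fun _ : ℕ => (PMF.uniformOfFintype Bool).toMeasure
  have hν : ∀ b, ν {b} = 0 := fun b => by
    simp only [ν, Measure.infinitePi_singleton,
      PMF.toMeasure_apply_singleton _ _ (measurableSet_singleton _),
      PMF.uniformOfFintype_apply, Fintype.card_bool]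
    exact ENNReal.tprod_const_eq_zero_of_lt_one (by norm_num)
  refine ⟨ν.map g, Measure.isProbabilityMeasure_map hgc.measurable.aemeasurable,
    ⟨fun x => ?_⟩, ?_⟩
  · rw [Measure.map_apply hgc.measurable (measurableSet_singleton x)]
    exact (subsingleton_singleton.preimage hgi).induction_on (p := fun s => ν s = 0)
      measure_empty hν
  · rw [Measure.map_apply hgc.measurable hK.closed.measurableSet.compl,
      preimage_compl, preimage_eq_univ_iff.2 hgK, compl_univ, measure_empty]

theorem Preperfect.exists_isProbabilityMeasure_pos {α : Type*} [MetricSpace α]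
    [CompleteSpace α] [SecondCountableTopology α] [MeasurableSpace α] [BorelSpace α] {C : Set α}
    (hC : Preperfect C) (hne : C.Nonempty) :
    ∃ μ : Measure α, IsProbabilityMeasure μ ∧ NullSingletonClass μ ∧ μ (closure C)ᶜ = 0 ∧
      ∀ U, IsOpen U → (U ∩ C).Nonempty → 0 < μ U := by
  obtain ⟨B, hBc, -, hB⟩ := exists_countable_basis α
  set ι := {V ∈ B | (V ∩ C).Nonempty}
  have : Countable ι := (hBc.mono (sep_subset _ _)).to_subtype
  choose m hm hm0 hmC using fun V : ι =>
    (hC.open_inter (hB.isOpen V.2.1)).perfect_closure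
      |>.exists_isProbabilityMeasure_nullSingletonClass (V.2.2.mono subset_closure)
  obtain ⟨w, hw0, hw⟩ := ENNReal.exists_pos_sum_of_countable one_ne_zero ι
  set ν := Measure.sum fun V => (w V : ENNReal) • m V
  have : IsFiniteMeasure ν := ⟨by
    simpa [ν, Measure.sum_apply _ MeasurableSet.univ, (hm _).measure_univ] using
      hw.trans ENNReal.one_lt_top⟩
  have hνU : ∀ U, IsOpen U → (U ∩ C).Nonempty → 0 < ν U := by
    rintro U hU ⟨x, hxU, hxC⟩
    obtain ⟨V, hVB, hxV, hVU⟩ := hB.exists_closure_subset (hU.mem_nhds hxU)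
    set i : ι := ⟨V, hVB, x, hxV, hxC⟩
    have : m i Uᶜ = 0 := measure_mono_null
      (compl_subset_compl.2 ((closure_mono inter_subset_left).trans hVU)) (hmC i)
    rw [prob_compl_eq_zero_iff hU.measurableSet] at this
    refine lt_of_lt_of_le ?_ (Measure.le_sum _ i U)
    simp [this, hw0]
  have : NeZero ν := ⟨fun h => by simpa [h] using hνU univ isOpen_univ (by simpa using hne)⟩
  refine ⟨(ν univ)⁻¹ • ν, inferInstance, ⟨fun x => ?_⟩, ?_, fun U hU hUC => ?_⟩
  · simp [ν, Measure.sum_apply _ (measurableSet_singleton x), (hm0 _).measure_singleton]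
  · simp [ν, Measure.sum_apply _ isClosed_closure.measurableSet.compl, fun V =>
      measure_mono_null (compl_subset_compl.2 (closure_mono inter_subset_right)) (hmC V)]
  · simpa [measure_ne_top] using hνU U hU hUC

theorem IsClosed.exists_Ioc_inter_eq_empty {A : Set ℝ} (hA : IsClosed A) {a t : ℝ} (ha : a ∈ A)
    (hat : a ≤ t) :
    ∃ s ∈ A ∩ Icc a t, Ioc s t ∩ A = ∅ := by
  have hK : IsCompact (A ∩ Icc a t) := isCompact_Icc.inter_left hA
  refine ⟨sSup (A ∩ Icc a t), hK.sSup_mem ⟨a, ha, le_rfl, hat⟩, ?_⟩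
  refine eq_empty_of_forall_notMem fun w ⟨hw, hwA⟩ => hw.1.not_ge ?_
  exact le_csSup hK.bddAbove
    ⟨hwA, (le_csSup hK.bddAbove ⟨ha, le_rfl, hat⟩).trans hw.1.le, hw.2⟩

theorem IsClosed.exists_Ico_inter_eq_empty {A : Set ℝ} (hA : IsClosed A) {b t : ℝ} (hb : b ∈ A)
    (htb : t ≤ b) :
    ∃ s ∈ A ∩ Icc t b, Ico t s ∩ A = ∅ := by
  have hK : IsCompact (A ∩ Icc t b) := isCompact_Icc.inter_left hA
  refine ⟨sInf (A ∩ Icc t b), hK.sInf_mem ⟨b, hb, htb, le_rfl⟩, ?_⟩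
  refine eq_empty_of_forall_notMem fun w ⟨hw, hwA⟩ => hw.2.not_ge ?_
  exact csInf_le hK.bddBelow
    ⟨hwA, hw.1, hw.2.le.trans (csInf_le hK.bddBelow ⟨hb, htb, le_rfl⟩)⟩

theorem IsClosed.exists_gap_of_Icc_inter_eq_empty {A : Set ℝ} (hA : IsClosed A) {u v c d : ℝ}
    (hu : u ∈ A) (hv : v ∈ A) (huc : u ≤ c) (hcd : c ≤ d) (hdv : d ≤ v) (hcdA : Icc c d ∩ A = ∅) :
    ∃ s ∈ A ∩ Icc u c, ∃ t ∈ A ∩ Icc d v, s < t ∧ Ioo s t ∩ A = ∅ := by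
  obtain ⟨s, hs, hsc⟩ := hA.exists_Ioc_inter_eq_empty hu huc
  obtain ⟨t, ht, hdt⟩ := hA.exists_Ico_inter_eq_empty hv hdv
  have hout : ∀ w ∈ A, w ∉ Ioc s c ∧ w ∉ Icc c d ∧ w ∉ Ico d t := fun w hw =>
    ⟨fun h => hsc.subset ⟨h, hw⟩, fun h => hcdA.subset ⟨h, hw⟩, fun h => hdt.subset ⟨h, hw⟩⟩
  have hsc' : s < c := lt_of_le_of_ne hs.2.2 fun h => (hout s hs.1).2.1 ⟨h.ge, h ▸ hcd⟩
  refine ⟨s, hs, t, ht, hsc'.trans_le (hcd.trans ht.2.1), ?_⟩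
  refine eq_empty_of_forall_notMem fun w ⟨hw, hwA⟩ => ?_
  obtain ⟨h1, h2, h3⟩ := hout w hwA
  simp only [mem_Ioc, mem_Icc, mem_Ico, not_and_or, not_le, not_lt] at h1 h2 h3
  rw [mem_Ioo] at hw
  rcases h1 with h1 | h1 <;> rcases h2 with h2 | h2 <;> rcases h3 with h3 | h3 <;> linarith

theorem ends_of_gap_diff_Ioo {A : Set ℝ} {s t u v : ℝ} (hs : s ∈ A) (ht : t ∈ A)
    (hu : u ∈ A \ Ioo s t) (hv : v ∈ A \ Ioo s t) (hgap : Ioo u v ∩ (A \ Ioo s t) = ∅) :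
    (u = s ∧ v = t) ∨ Ioo u v ∩ A = ∅ := by
  refine or_iff_not_imp_right.2 fun h => ?_
  obtain ⟨w, hw, hwA⟩ := nonempty_iff_ne_empty.2 h
  have hout : ∀ x ∈ A \ Ioo s t, x ∉ Ioo u v := fun x hx hx' => hgap.subset ⟨hx', hx⟩
  have hwst : w ∈ Ioo s t := by_contra fun h => hout w ⟨hwA, h⟩ hw
  have hs' := hout s ⟨hs, fun h => h.1.false⟩
  have ht' := hout t ⟨ht, fun h => h.2.false⟩
  simp only [mem_Ioo, Set.mem_sdiff, not_and_or, not_lt] at hw hwst hs' ht' hu hv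
  constructor
  · rcases hu.2 with h | h <;> rcases hs' with h' | h' <;> linarith
  · rcases hv.2 with h | h <;> rcases ht' with h' | h' <;> linarith

namespace ProbabilityTheory
variable {μ : Measure ℝ} [IsProbabilityMeasure μ] {a b : ℝ}

theorem cdf_eq_one_of_measure_compl_Icc (hμ : μ (Icc a b)ᶜ = 0) : cdf μ b = 1 := by
  have : μ (Iic b)ᶜ = 0 := measure_mono_null (compl_subset_compl.2 Icc_subset_Iic_self) hμ
  rwa [prob_compl_eq_zero_iff measurableSet_Iic, ← ofReal_cdf, ENNReal.ofReal_eq_one] at this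

variable [NullSingletonClass μ]

theorem continuous_cdf : Continuous (cdf μ) := by
  refine continuous_iff_continuousAt.2 fun x => continuousAt_iff_continuous_left_right.2
    ⟨?_, (cdf μ).right_continuous x⟩
  rw [← continuousWithinAt_Iio_iff_Iic, (monotone_cdf μ).continuousWithinAt_Iio_iff_leftLim_eq]
  have h := (cdf μ).measure_singleton x
  rw [measure_cdf, measure_singleton, eq_comm, ENNReal.ofReal_eq_zero, sub_nonpos] at h
  exact le_antisymm ((monotone_cdf μ).leftLim_le le_rfl) h

theorem cdf_eq_cdf_iff {s t : ℝ} (hst : s ≤ t) : cdf μ s = cdf μ t ↔ μ (Ioo s t) = 0 := by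
  have h := (cdf μ).measure_Ioc s t
  rw [measure_cdf] at h
  rw [measure_congr Ioo_ae_eq_Ioc, h, ENNReal.ofReal_eq_zero, sub_nonpos]
  exact ⟨fun h => h.ge, fun h => le_antisymm (monotone_cdf μ hst) h⟩

theorem cdf_eq_zero_of_measure_compl_Icc (hμ : μ (Icc a b)ᶜ = 0) : cdf μ a = 0 := by
  refine le_antisymm ?_ (cdf_nonneg μ a)
  rw [← ENNReal.ofReal_eq_zero, ofReal_cdf]
  refine measure_mono_null (fun x (hx : x ≤ a) => ?_)
    (measure_union_null hμ (measure_singleton a))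
  rcases hx.lt_or_eq with h | rfl
  · exact Or.inl fun h' => h'.1.not_gt h
  · exact Or.inr rfl

theorem _root_.IsClosed.cdf_image_eq_Icc {A : Set ℝ} (hA : IsClosed A) (hAab : A ⊆ Icc a b)
    (ha : a ∈ A) (hμA : μ Aᶜ = 0) : cdf μ '' A = Icc 0 1 := by
  have hμ : μ (Icc a b)ᶜ = 0 := measure_mono_null (compl_subset_compl.2 hAab) hμA
  refine Subset.antisymm ?_ fun y hy => ?_
  · rintro _ ⟨s, -, rfl⟩
    exact ⟨cdf_nonneg μ s, cdf_le_one μ s⟩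
  rw [← cdf_eq_zero_of_measure_compl_Icc hμ, ← cdf_eq_one_of_measure_compl_Icc hμ] at hy
  obtain ⟨t, ht, rfl⟩ := intermediate_value_Icc (hAab ha).2 continuous_cdf.continuousOn hy
  obtain ⟨s, hs, hst⟩ := hA.exists_Ioc_inter_eq_empty ha ht.1
  have hgap : Ioo s t ⊆ Aᶜ := fun w hw hwA => hst.subset ⟨Ioo_subset_Ioc_self hw, hwA⟩
  exact ⟨s, hs.1, (cdf_eq_cdf_iff hs.2.2).2 (measure_mono_null hgap hμA)⟩

end ProbabilityTheory

theorem IsCompact.exists_continuousOn_injOn_eqOn_comp {α β X : Type*} [TopologicalSpace α]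
    [Nonempty α] [TopologicalSpace β] [T2Space β] [TopologicalSpace X] {A : Set α}
    (hA : IsCompact A) {f : α → X} {ψ : α → β} (hf : ContinuousOn f A) (hψ : ContinuousOn ψ A)
    (hfib : ∀ s ∈ A, ∀ t ∈ A, f s = f t ↔ ψ s = ψ t) :
    ∃ g : β → X, ContinuousOn g (ψ '' A) ∧ InjOn g (ψ '' A) ∧ EqOn (g ∘ ψ) f A := by
  set g := f ∘ Function.invFunOn ψ A
  have hgψ : EqOn (g ∘ ψ) f A := fun s hs => by
    obtain ⟨hs', hψs'⟩ := Function.invFunOn_pos ⟨s, hs, rfl⟩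
    exact (hfib _ hs' s hs).2 hψs'
  refine ⟨g, ?_, ?_, hgψ⟩
  · have : CompactSpace A := isCompact_iff_compactSpace.1 hA
    have hq : Topology.IsQuotientMap (A.imageFactorization ψ) :=
      .of_surjective_continuous imageFactorization_surjective
        (hψ.domRestrict.subtype_mk _)
    rw [continuousOn_iff_continuous_domRestrict, hq.continuous_iff]
    convert hf.domRestrict using 1
    funext s
    exact hgψ s.2
  · rintro _ ⟨s, hs, rfl⟩ _ ⟨t, ht, rfl⟩ hst
    exact (hfib s hs t ht).1 (by simpa [← hgψ hs, ← hgψ ht] using hst)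

structure IsGapCollapsing {X : Type*} (f : ℝ → X) (a b : ℝ) (A : Set ℝ) : Prop where
  isClosed : IsClosed A
  subset_Icc : A ⊆ Icc a b
  left_mem : a ∈ A
  right_mem : b ∈ A
  eq_of_gap : ∀ u ∈ A, ∀ v ∈ A, u < v → Ioo u v ∩ A = ∅ → f u = f v

theorem isGapCollapsing_Icc {X : Type*} {f : ℝ → X} {a b : ℝ} (hab : a ≤ b) :
    IsGapCollapsing f a b (Icc a b) where
  isClosed := isClosed_Icc
  subset_Icc := subset_rfl
  left_mem := left_mem_Icc.2 hab
  right_mem := right_mem_Icc.2 hab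
  eq_of_gap u hu v hv huv hgap := by
    refine absurd hgap (nonempty_iff_ne_empty.1 ⟨(u + v) / 2, ?_, ?_, ?_⟩)
    · constructor <;> linarith
    · linarith [hu.1, hv.1]
    · linarith [hu.2, hv.2]

namespace IsGapCollapsing
variable {X : Type*} {f : ℝ → X} {a b : ℝ} {A : Set ℝ}

theorem sInter [TopologicalSpace X] [T2Space X] (hf : Continuous f) {c : Set (Set ℝ)}
    (hc : c ⊆ {A | IsGapCollapsing f a b A}) (hchain : IsChain (· ⊆ ·) c) (hne : c.Nonempty) :
    IsGapCollapsing f a b (⋂₀ c) where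
  isClosed := isClosed_sInter fun B hB => (hc hB).isClosed
  subset_Icc := (sInter_subset_of_mem hne.some_mem).trans (hc hne.some_mem).subset_Icc
  left_mem := mem_sInter.2 fun B hB => (hc hB).left_mem
  right_mem := mem_sInter.2 fun B hB => (hc hB).right_mem
  eq_of_gap u hu v hv huv hgap := by
    suffices (u, v) ∈ closure {p : ℝ × ℝ | f p.1 = f p.2} by
      exact (isClosed_eq (hf.comp continuous_fst) (hf.comp continuous_snd)).closure_subset this
    refine Metric.mem_closure_iff.2 fun ε hε => ?_
    set δ := min (ε / 2) ((v - u) / 2)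
    have hδ : 0 < δ := lt_min (half_pos hε) (by linarith)
    have hδε : δ < ε := (min_le_left _ _).trans_lt (half_lt_self hε)
    have hδuv : δ ≤ (v - u) / 2 := min_le_right _ _
    have : Nonempty c := hne.to_subtype
    obtain ⟨⟨B, hBc⟩, hB⟩ := (isCompact_Icc (a := u + δ) (b := v - δ))
      |>.elim_directed_family_closed ((↑) : c → Set ℝ) (fun B => (hc B.2).isClosed)
      (by
        rw [← sInter_eq_iInter]
        exact eq_empty_of_forall_notMem fun w hw => hgap.subset
          ⟨⟨by linarith [hw.1.1], by linarith [hw.1.2]⟩, hw.2⟩)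
      fun B₁ B₂ => (hchain.total B₁.2 B₂.2).elim (fun h => ⟨B₁, subset_rfl, h⟩)
        fun h => ⟨B₂, h, subset_rfl⟩
    obtain ⟨s, hs, t, ht, hst, hgapB⟩ := (hc hBc).isClosed.exists_gap_of_Icc_inter_eq_empty
      (sInter_subset_of_mem hBc hu) (sInter_subset_of_mem hBc hv) (by linarith) (by linarith)
      (by linarith) hB
    refine ⟨(s, t), (hc hBc).eq_of_gap s hs.1 t ht.1 hst hgapB, ?_⟩
    rw [Prod.dist_eq, Real.dist_eq, Real.dist_eq, abs_of_nonpos (by linarith [hs.2.1]),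
      abs_of_nonneg (by linarith [ht.2.2])]
    exact max_lt (by linarith [hs.2.2]) (by linarith [ht.2.1])

theorem exists_minimal [TopologicalSpace X] [T2Space X] (hf : Continuous f) (hab : a ≤ b) :
    ∃ A, Minimal (IsGapCollapsing f a b) A := by
  refine zorn_superset _ fun c hc hchain => ?_
  rcases c.eq_empty_or_nonempty with rfl | hne
  · exact ⟨_, isGapCollapsing_Icc hab, by simp⟩
  · exact ⟨_, sInter hf hc hchain hne, fun _ => sInter_subset_of_mem⟩

theorem diff_Ioo (hA : IsGapCollapsing f a b A) {s t : ℝ} (hs : s ∈ A) (ht : t ∈ A)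
    (hfst : f s = f t) : IsGapCollapsing f a b (A \ Ioo s t) where
  isClosed := hA.isClosed.sdiff isOpen_Ioo
  subset_Icc := sdiff_subset.trans hA.subset_Icc
  left_mem := ⟨hA.left_mem, fun h => h.1.not_ge (hA.subset_Icc hs).1⟩
  right_mem := ⟨hA.right_mem, fun h => h.2.not_ge (hA.subset_Icc ht).2⟩
  eq_of_gap u hu v hv huv hgap := by
    rcases ends_of_gap_diff_Ioo hs ht hu hv hgap with ⟨rfl, rfl⟩ | h
    · exact hfst
    · exact hA.eq_of_gap u hu.1 v hv.1 huv h

theorem eq_iff_of_minimal (hA : Minimal (IsGapCollapsing f a b) A) {s t : ℝ} (hs : s ∈ A)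
    (ht : t ∈ A) (hst : s < t) : f s = f t ↔ Ioo s t ∩ A = ∅ := by
  refine ⟨fun hfst => ?_, hA.prop.eq_of_gap s hs t ht hst⟩
  have hsub : A ⊆ A \ Ioo s t := hA.2 (hA.prop.diff_Ioo hs ht hfst) sdiff_subset
  exact eq_empty_of_forall_notMem fun w hw => (hsub hw.2).2 hw.1

theorem preperfect_of_minimal (hA : Minimal (IsGapCollapsing f a b) A) :
    Preperfect (Ioo a b ∩ A) := by
  refine fun x hx => AccPt.nhds_inter ?_ (isOpen_Ioo.mem_nhds hx.1)
  by_contra hacc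
  obtain ⟨U, hU, hUA⟩ : ∃ U ∈ 𝓝 x, ∀ y ∈ U ∩ A, y = x := by
    simpa [accPt_iff_nhds] using hacc
  obtain ⟨l, r, hlr, hU⟩ := mem_nhds_iff_exists_Ioo_subset.1 hU
  have hA' := hA.prop
  obtain ⟨s, hs, hsgap⟩ := hA'.isClosed.exists_Ioc_inter_eq_empty hA'.left_mem
    (le_max_left a l)
  obtain ⟨t, ht, htgap⟩ := hA'.isClosed.exists_Ico_inter_eq_empty hA'.right_mem
    (min_le_left b r)
  have hout : ∀ w ∈ A, w ≠ x → w ∉ Ioo (max a l) (min b r) := fun w hw hwx h =>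
    hwx (hUA w ⟨hU ⟨(le_max_right _ _).trans_lt h.1, h.2.trans_le (min_le_right _ _)⟩, hw⟩)
  have hlx : max a l < x := max_lt hx.1.1 hlr.1
  have hxr : x < min b r := lt_min hx.1.2 hlr.2
  have hsx : s < x := hs.2.2.trans_lt hlx
  have hxt : x < t := hxr.trans_le ht.2.1
  have hleft : Ioo s x ∩ A = ∅ := eq_empty_of_forall_notMem fun w ⟨hw, hwA⟩ => by
    rcases le_or_gt w (max a l) with h | h
    · exact hsgap.subset ⟨⟨hw.1, h⟩, hwA⟩
    · exact hout w hwA hw.2.ne ⟨h, hw.2.trans hxr⟩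
  have hright : Ioo x t ∩ A = ∅ := eq_empty_of_forall_notMem fun w ⟨hw, hwA⟩ => by
    rcases le_or_gt (min b r) w with h | h
    · exact htgap.subset ⟨⟨h, hw.2⟩, hwA⟩
    · exact hout w hwA hw.1.ne' ⟨hlx.trans hw.1, h⟩
  have hfst : f s = f t := (hA'.eq_of_gap s hs.1 x hx.2 hsx hleft).trans
    (hA'.eq_of_gap x hx.2 t ht.1 hxt hright)
  exact ((eq_iff_of_minimal hA hs.1 ht.1 (hsx.trans hxt)).1 hfst).subset ⟨⟨hsx, hxt⟩, hx.2⟩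

theorem eq_iff_cdf_eq_of_minimal (hA : Minimal (IsGapCollapsing f a b) A) {μ : Measure ℝ}
    [IsProbabilityMeasure μ] [NullSingletonClass μ] (hμA : μ Aᶜ = 0)
    (hμpos : ∀ U, IsOpen U → (U ∩ (Ioo a b ∩ A)).Nonempty → 0 < μ U) {s t : ℝ} (hs : s ∈ A)
    (ht : t ∈ A) : f s = f t ↔ cdf μ s = cdf μ t := by
  wlog hst : s ≤ t generalizing s t
  · simpa only [eq_comm] using this ht hs (le_of_not_ge hst)
  rcases hst.eq_or_lt with rfl | hlt
  · simp
  rw [eq_iff_of_minimal hA hs ht hlt, cdf_eq_cdf_iff hst]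
  refine ⟨fun hgap => measure_mono_null (fun w hw hwA => hgap.subset ⟨hw, hwA⟩) hμA,
    fun hμst => eq_empty_of_forall_notMem fun w ⟨hw, hwA⟩ => ?_⟩
  have hwab : w ∈ Ioo a b := ⟨(hA.prop.subset_Icc hs).1.trans_lt hw.1,
    hw.2.trans_le (hA.prop.subset_Icc ht).2⟩
  exact (hμpos _ isOpen_Ioo ⟨w, hw, hwab, hwA⟩).ne' hμst

theorem exists_arc_of_minimal [TopologicalSpace X] (hf : Continuous f)
    (hA : Minimal (IsGapCollapsing f a b) A) (hC : (Ioo a b ∩ A).Nonempty) :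
    ∃ g : ℝ → X, ContinuousOn g (Icc 0 1) ∧ InjOn g (Icc 0 1) ∧ g 0 = f a ∧ g 1 = f b := by
  obtain ⟨μ, _, _, hμC, hμpos⟩ := (preperfect_of_minimal hA).exists_isProbabilityMeasure_pos hC
  have hμA : μ Aᶜ = 0 := measure_mono_null
    (compl_subset_compl.2 (closure_minimal inter_subset_right hA.prop.isClosed)) hμC
  have hμIcc : μ (Icc a b)ᶜ = 0 :=
    measure_mono_null (compl_subset_compl.2 hA.prop.subset_Icc) hμA
  obtain ⟨g, hgc, hgi, hgf⟩ := (isCompact_Icc.of_isClosed_subset hA.prop.isClosed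
    hA.prop.subset_Icc).exists_continuousOn_injOn_eqOn_comp hf.continuousOn
    continuous_cdf.continuousOn fun s hs t ht => eq_iff_cdf_eq_of_minimal hA hμA hμpos hs ht
  rw [hA.prop.isClosed.cdf_image_eq_Icc hA.prop.subset_Icc hA.prop.left_mem hμA] at hgc hgi
  refine ⟨g, hgc, hgi, ?_, ?_⟩
  · simpa [cdf_eq_zero_of_measure_compl_Icc hμIcc] using hgf hA.prop.left_mem
  · simpa [cdf_eq_one_of_measure_compl_Icc hμIcc] using hgf hA.prop.right_mem

end IsGapCollapsing

theorem arc_in_peano_image_general {X : Type*} [TopologicalSpace X] [T2Space X]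
    (G : ℝ → X) (hGc : ContinuousOn G (Set.Icc (-1 : ℝ) 1))
    (hne : G (-1) ≠ G 1) :
    ∃ j : ℝ → X, ContinuousOn j (Set.Icc (-1 : ℝ) 1) ∧
      Set.InjOn j (Set.Icc (-1 : ℝ) 1) ∧ j (-1) = G (-1) ∧ j 1 = G 1 := by
  have h₁ : (-1 : ℝ) ≤ 1 := by norm_num
  set f := IccExtend h₁ ((Icc (-1 : ℝ) 1).domRestrict G)
  have hf : Continuous f := (continuousOn_iff_continuous_domRestrict.1 hGc).Icc_extend'
  have hfG : EqOn f G (Icc (-1) 1) := fun x hx => IccExtend_of_mem h₁ _ hx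
  obtain ⟨A, hA⟩ := IsGapCollapsing.exists_minimal hf h₁
  have hC : (Ioo (-1) 1 ∩ A).Nonempty := nonempty_iff_ne_empty.2 fun h => hne <| by
    rw [← hfG (left_mem_Icc.2 h₁), ← hfG (right_mem_Icc.2 h₁)]
    exact hA.prop.eq_of_gap _ hA.prop.left_mem _ hA.prop.right_mem (by norm_num) h
  obtain ⟨g, hgc, hgi, hg0, hg1⟩ := IsGapCollapsing.exists_arc_of_minimal hf hA hC
  have hmaps : MapsTo (fun x : ℝ => (x + 1) / 2) (Icc (-1) 1) (Icc 0 1) := fun x hx =>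
    ⟨by linarith [hx.1], by linarith [hx.2]⟩
  refine ⟨fun x => g ((x + 1) / 2), hgc.comp (by fun_prop) hmaps,
    hgi.comp (fun x _ y _ h => by simpa using h) hmaps, ?_, ?_⟩
  · simpa [hg0] using hfG (left_mem_Icc.2 h₁)
  · simpa [hg1] using hfG (right_mem_Icc.2 h₁)

/-- arcs in Hausdorff continuous images of an interval. -/
theorem arc_in_peano_image {X : Type*} [TopologicalSpace X] [T2Space X]
    (G : ℝ → X) (hGc : ContinuousOn G (Set.Icc (-1 : ℝ) 1))
    (hGs : ∀ x : X, ∃ t ∈ Set.Icc (-1 : ℝ) 1, G t = x)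
    (hne : G (-1) ≠ G 1) :
    ∃ j : ℝ → X, ContinuousOn j (Set.Icc (-1 : ℝ) 1) ∧
      Set.InjOn j (Set.Icc (-1 : ℝ) 1) ∧ j (-1) = G (-1) ∧ j 1 = G 1 :=
  arc_in_peano_image_general G hGc hne
end

section
/- Let φ be a continuous flow on a compact metric space M and x₀ a non-singular point with a neighborhood U. Then there exist a set S containing x₀ and τ₀ > 0 such that the map φ restricted to (-τ₀, τ₀) × S, (t,x) ↦ φ(t,x), is a homeomorphism onto its image and the image is an open neighborhood of x₀. (Local section / Bebutov-type theorem.) -/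
open Set Filter Metric Topology

/-- local cross-section (Bebutov-type) theorem. -/
theorem local_section {M : Type*} [MetricSpace M] [CompactSpace M]
    (φ : ℝ × M → M) (hφ : IsFlow φ)
    (x₀ : M) (hx₀ : ∃ ε > 0, ∀ t : ℝ, t ≠ 0 → |t| < ε → φ (t, x₀) ≠ x₀)
    (U : Set M) (hU : U ∈ nhds x₀) :
    ∃ (S : Set M) (τ₀ : ℝ), 0 < τ₀ ∧ x₀ ∈ S ∧
      (∀ t ∈ Set.Ioo (-τ₀) τ₀, ∀ x ∈ S, φ (t, x) ∈ U) ∧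
      IsEmbedding (fun p : Set.Ioo (-τ₀) τ₀ × S => φ (p.1.1, p.2.1)) ∧
      IsOpen {y : M | ∃ t ∈ Set.Ioo (-τ₀) τ₀, ∃ x ∈ S, y = φ (t, x)} ∧
      x₀ ∈ {y : M | ∃ t ∈ Set.Ioo (-τ₀) τ₀, ∃ x ∈ S, y = φ (t, x)} := by
  obtain ⟨hc, h0, hadd⟩ := hφ
  obtain ⟨ε, hε, hne⟩ := hx₀
  set lam : ℝ := ε / 2 with hlam
  set η : ℝ := ε / 8 with hηdef
  have hη0 : 0 < η := by positivity
  have hinv : ∀ (t : ℝ) (x : M), φ (-t, φ (t, x)) = x := by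
    intro t x; rw [← hadd, neg_add_cancel, h0]
  have hinv' : ∀ (t : ℝ) (x : M), φ (t, φ (-t, x)) = x := by
    intro t x; rw [← hadd, add_neg_cancel, h0]
  -- the two orbit arcs through x₀ are disjoint
  have key : ∀ s ∈ Icc (-η) η, ∀ s' ∈ Icc (lam - η) (lam + η),
      φ (s, x₀) ≠ φ (s', x₀) := by
    intro s hs s' hs' heq
    have h1 : φ (s' - s, x₀) = x₀ := by
      have h2 := congrArg (fun z => φ (-s, z)) heq
      rw [hinv] at h2
      rw [← hadd] at h2
      rw [show -s + s' = s' - s by ring] at h2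
      exact h2.symm
    obtain ⟨a1, a2⟩ := hs; obtain ⟨b1, b2⟩ := hs'
    simp only [hlam, hηdef] at a1 a2 b1 b2
    have hpos : 0 < s' - s := by linarith
    refine hne (s' - s) (ne_of_gt hpos) ?_ h1
    rw [abs_lt]
    constructor <;> linarith
  set A : Set M := (fun s => φ (s, x₀)) '' Icc (-η) η with hAdef
  set B : Set M := (fun s => φ (s, x₀)) '' Icc (lam - η) (lam + η) with hBdef
  have hφx₀ : Continuous fun s : ℝ => φ (s, x₀) :=
    hc.comp (continuous_id.prodMk continuous_const)
  have hA : IsCompact A := isCompact_Icc.image hφx₀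
  have hB : IsCompact B := isCompact_Icc.image hφx₀
  have hABdisj : Disjoint A B := by
    rw [Set.disjoint_left]
    rintro a ⟨s, hs, rfl⟩ ⟨s', hs', hss'⟩
    exact key s hs s' hs' hss'.symm
  obtain ⟨δ₁, hδ₁, hthick⟩ :=
    hA.exists_thickening_subset_open hB.isClosed.isOpen_compl
      (Set.disjoint_right.mp hABdisj.symm)
  have hAB : ∀ a ∈ A, ∀ b ∈ B, δ₁ ≤ dist a b := by
    intro a ha b hb
    by_contra h
    push_neg at h
    exact hthick (Metric.mem_thickening_iff.mpr ⟨a, ha, by rwa [dist_comm]⟩) hb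
  -- uniform continuity of φ on a compact time interval
  have hKc : IsCompact (Icc (-η) (lam + η) ×ˢ (univ : Set M)) :=
    isCompact_Icc.prod isCompact_univ
  have huc := hKc.uniformContinuousOn_of_continuous hc.continuousOn
  rw [Metric.uniformContinuousOn_iff] at huc
  obtain ⟨δ₂, hδ₂, hδ₂'⟩ := huc (δ₁ / 3) (by positivity)
  set r : ℝ := δ₂ / 2 with hrdef
  have hr0 : 0 < r := by positivity
  have hIccsub : Icc (-η) η ⊆ Icc (-η) (lam + η) := by
    apply Icc_subset_Icc le_rfl
    simp only [hlam, hηdef]; linarith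
  have hIccsub' : Icc (lam - η) (lam + η) ⊆ Icc (-η) (lam + η) := by
    apply Icc_subset_Icc _ le_rfl
    simp only [hlam, hηdef]; linarith
  have hr : ∀ x ∈ closedBall x₀ r, ∀ s ∈ Icc (-η) (lam + η),
      dist (φ (s, x)) (φ (s, x₀)) < δ₁ / 3 := by
    intro x hx s hs
    apply hδ₂' (s, x) (by exact ⟨hs, trivial⟩) (s, x₀) (by exact ⟨hs, trivial⟩)
    rw [Prod.dist_eq]
    simp only [dist_self]
    rw [max_eq_right dist_nonneg]
    have := Metric.mem_closedBall.mp hx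
    calc dist x x₀ ≤ r := this
      _ < δ₂ := by simp only [hrdef]; linarith
  set K₀ : Set M := φ '' (Icc (-η) η ×ˢ closedBall x₀ r) with hK₀def
  set K₁ : Set M := φ '' (Icc (lam - η) (lam + η) ×ˢ closedBall x₀ r) with hK₁def
  have hK₀ : IsCompact K₀ := (isCompact_Icc.prod (isCompact_closedBall _ _)).image hc
  have hK₁ : IsCompact K₁ := (isCompact_Icc.prod (isCompact_closedBall _ _)).image hc
  have hKdisj : Disjoint K₀ K₁ := by
    rw [Set.disjoint_left]
    rintro z ⟨⟨s, x⟩, ⟨hs, hx⟩, rfl⟩ ⟨⟨s', y⟩, ⟨hs', hy⟩, h⟩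
    have d1 := hr x hx s (hIccsub hs)
    have d2 := hr y hy s' (hIccsub' hs')
    have d3 : δ₁ ≤ dist (φ (s, x₀)) (φ (s', x₀)) :=
      hAB _ ⟨s, hs, rfl⟩ _ ⟨s', hs', rfl⟩
    have d4 : dist (φ (s, x₀)) (φ (s', x₀)) ≤
        dist (φ (s, x₀)) (φ (s, x)) + dist (φ (s, x)) (φ (s', y)) +
          dist (φ (s', y)) (φ (s', x₀)) := dist_triangle4 _ _ _ _
    have hmid : dist (φ (s, x)) (φ (s', y)) = 0 := by rw [h, dist_self]
    linarith [dist_comm (φ (s, x₀)) (φ (s, x)), d1, d2, d3, d4, hmid]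
  obtain ⟨u, hu0, hu1, -⟩ :=
    exists_continuous_zero_one_of_isClosed hK₀.isClosed hK₁.isClosed hKdisj
  -- the Bebutov time function
  set g : M → ℝ := fun x => ∫ s in (0:ℝ)..lam, u (φ (s, x)) with hgdef
  have hgcont : Continuous g := by
    apply intervalIntegral.continuous_parametric_intervalIntegral_of_continuous'
      (f := fun (x : M) (s : ℝ) => u (φ (s, x)))
    exact u.continuous.comp (hc.comp (continuous_snd.prodMk continuous_fst))
  have hucont : ∀ x : M, Continuous fun s : ℝ => u (φ (s, x)) := fun x =>
    u.continuous.comp (hc.comp (continuous_id.prodMk continuous_const))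
  -- key identity : g (φ (t, x)) = g x + t
  have hkey : ∀ x ∈ closedBall x₀ r, ∀ t ∈ Icc (-η) η, g (φ (t, x)) = g x + t := by
    intro x hx t ht
    have hint : ∀ a b : ℝ, IntervalIntegrable (fun s => u (φ (s, x))) MeasureTheory.volume a b :=
      fun a b => (hucont x).intervalIntegrable a b
    have e1 : g (φ (t, x)) = ∫ s in t..(lam + t), u (φ (s, x)) := by
      have h2 : ∀ s : ℝ, u (φ (s, φ (t, x))) = u (φ (s + t, x)) := fun s => by rw [← hadd]
      simp only [hgdef, h2]
      rw [intervalIntegral.integral_comp_add_right (fun s => u (φ (s, x))) t, zero_add]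
    have e2 : (∫ s in t..(0:ℝ), u (φ (s, x))) = 0 := by
      have h2 : (∫ s in t..(0:ℝ), u (φ (s, x))) = ∫ s in t..(0:ℝ), (0:ℝ) := by
        apply intervalIntegral.integral_congr
        intro s hs
        have hsη : s ∈ Icc (-η) η := by
          rcases Set.mem_uIcc.mp hs with ⟨h1, h2⟩ | ⟨h1, h2⟩ <;>
            exact ⟨by linarith [ht.1, hη0.le], by linarith [ht.2, hη0.le]⟩
        exact hu0 ⟨(s, x), ⟨hsη, hx⟩, rfl⟩
      rw [h2]; simp
    have e3 : (∫ s in lam..(lam + t), u (φ (s, x))) = t := by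
      have h2 : (∫ s in lam..(lam + t), u (φ (s, x))) = ∫ s in lam..(lam + t), (1:ℝ) := by
        apply intervalIntegral.integral_congr
        intro s hs
        have hsη : s ∈ Icc (lam - η) (lam + η) := by
          rcases Set.mem_uIcc.mp hs with ⟨h1, h2⟩ | ⟨h1, h2⟩
          · exact ⟨by linarith [ht.1], by linarith [ht.2]⟩
          · exact ⟨by linarith [ht.1], by linarith [ht.2]⟩
        exact hu1 ⟨(s, x), ⟨hsη, hx⟩, rfl⟩
      rw [h2]; simp
    have e4 : (∫ s in t..(0:ℝ), u (φ (s, x))) + (∫ s in (0:ℝ)..lam, u (φ (s, x)))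
        = ∫ s in t..lam, u (φ (s, x)) :=
      intervalIntegral.integral_add_adjacent_intervals (hint t 0) (hint 0 lam)
    have e5 : (∫ s in t..lam, u (φ (s, x))) + (∫ s in lam..(lam + t), u (φ (s, x)))
        = ∫ s in t..(lam + t), u (φ (s, x)) :=
      intervalIntegral.integral_add_adjacent_intervals (hint t lam) (hint lam (lam + t))
    have : g (φ (t, x)) = 0 + g x + t := by
      rw [e1, ← e5, ← e4, e2, e3]
    simpa using this
  -- neighborhood condition for U
  obtain ⟨δU, hδU, hδU'⟩ : ∃ δ > 0, ∀ t : ℝ, |t| < δ → ∀ x : M, dist x x₀ < δ → φ (t, x) ∈ U := by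
    have h1 : φ ⁻¹' U ∈ nhds ((0:ℝ), x₀) := by
      apply hc.continuousAt
      rwa [h0]
    rw [Metric.mem_nhds_iff] at h1
    obtain ⟨δ, hδ, hball⟩ := h1
    refine ⟨δ, hδ, fun t ht x hx => hball ?_⟩
    rw [Metric.mem_ball, Prod.dist_eq]
    rw [max_lt_iff]
    constructor
    · rwa [Real.dist_eq, sub_zero]
    · exact hx
  set τ₀ : ℝ := min η (δU / 2) with hτ₀def
  have hτ₀ : 0 < τ₀ := lt_min hη0 (by positivity)
  have hτ₀η : τ₀ ≤ η := min_le_left _ _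
  have hτ₀U : τ₀ < δU := (min_le_right _ _).trans_lt (by linarith)
  set r₁ : ℝ := min r (δU / 2) with hr₁def
  have hr₁ : 0 < r₁ := lt_min hr0 (by positivity)
  have hr₁r : r₁ ≤ r := min_le_left _ _
  have hr₁U : r₁ < δU := (min_le_right _ _).trans_lt (by linarith)
  set S : Set M := {x | x ∈ ball x₀ r₁ ∧ g x = g x₀} with hSdef
  have hx₀S : x₀ ∈ S := ⟨Metric.mem_ball_self hr₁, rfl⟩
  have hSball : ∀ x ∈ S, x ∈ closedBall x₀ r := fun x hx =>
    Metric.mem_closedBall.mpr (le_trans (Metric.mem_ball.mp hx.1).le hr₁r)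
  have hIoosub : Ioo (-τ₀) τ₀ ⊆ Icc (-η) η := fun t ht =>
    ⟨le_trans (neg_le_neg hτ₀η) ht.1.le, ht.2.le.trans hτ₀η⟩
  -- the basic computation on the image
  have himg : ∀ t ∈ Ioo (-τ₀) τ₀, ∀ x ∈ S, g (φ (t, x)) = g x₀ + t := by
    intro t ht x hx
    rw [hkey x (hSball x hx) t (hIoosub ht), hx.2]
  refine ⟨S, τ₀, hτ₀, hx₀S, ?_, ?_, ?_, ?_⟩
  · -- φ (t, x) ∈ U
    intro t ht x hx
    apply hδU' t _ x _
    · rw [abs_lt]; exact ⟨by linarith [ht.1, hτ₀U], by linarith [ht.2, hτ₀U]⟩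
    · exact lt_of_lt_of_le (Metric.mem_ball.mp hx.1) hr₁U.le
  · -- embedding
    set F : M → ℝ × M := fun z => (g z - g x₀, φ (g x₀ - g z, z)) with hFdef
    have hFc : Continuous F :=
      (hgcont.sub continuous_const).prodMk
        (hc.comp ((continuous_const.sub hgcont).prodMk continuous_id))
    have hfc : Continuous (fun p : Set.Ioo (-τ₀) τ₀ × S => φ (p.1.1, p.2.1)) :=
      hc.comp ((continuous_subtype_val.comp continuous_fst).prodMk
        (continuous_subtype_val.comp continuous_snd))
    apply IsEmbedding.of_comp hfc hFc
    have hcomp : (F ∘ fun p : Set.Ioo (-τ₀) τ₀ × S => φ (p.1.1, p.2.1)) =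
        fun p : Set.Ioo (-τ₀) τ₀ × S => ((p.1.1 : ℝ), (p.2.1 : M)) := by
      funext p
      obtain ⟨⟨t, ht⟩, ⟨x, hx⟩⟩ := p
      have hg1 : g (φ (t, x)) = g x₀ + t := himg t ht x hx
      simp only [Function.comp, hFdef]
      rw [hg1, show g x₀ + t - g x₀ = t by ring,
        show g x₀ - (g x₀ + t) = -t by ring, hinv]
    rw [hcomp]
    exact IsEmbedding.subtypeVal.prodMap IsEmbedding.subtypeVal
  · -- the image is open
    have heq : {y : M | ∃ t ∈ Set.Ioo (-τ₀) τ₀, ∃ x ∈ S, y = φ (t, x)} =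
        {z : M | g z - g x₀ ∈ Ioo (-τ₀) τ₀ ∧ φ (g x₀ - g z, z) ∈ ball x₀ r₁} := by
      ext z
      constructor
      · rintro ⟨t, ht, x, hx, rfl⟩
        have hg1 : g (φ (t, x)) = g x₀ + t := himg t ht x hx
        constructor
        · rw [hg1]; simpa using ht
        · rw [hg1, show g x₀ - (g x₀ + t) = -t by ring, hinv]
          exact hx.1
      · rintro ⟨h1, h2⟩
        set t : ℝ := g z - g x₀ with htdef
        set w : M := φ (g x₀ - g z, z) with hwdef
        have hwz : φ (t, w) = z := by
          rw [hwdef, show g x₀ - g z = -t by rw [htdef]; ring, hinv']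
        have hgw : g w = g x₀ := by
          have := hkey w (Metric.mem_closedBall.mpr
            (le_trans (Metric.mem_ball.mp h2).le hr₁r)) t (hIoosub h1)
          rw [hwz] at this
          rw [htdef] at this
          linarith
        exact ⟨t, h1, w, ⟨h2, hgw⟩, hwz.symm⟩
    rw [heq]
    rw [show {z : M | g z - g x₀ ∈ Ioo (-τ₀) τ₀ ∧ φ (g x₀ - g z, z) ∈ ball x₀ r₁} =
      ((fun z => g z - g x₀) ⁻¹' Ioo (-τ₀) τ₀) ∩
        ((fun z => φ (g x₀ - g z, z)) ⁻¹' ball x₀ r₁) from rfl]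
    exact ((isOpen_Ioo.preimage (hgcont.sub continuous_const)).inter
      (Metric.isOpen_ball.preimage (hc.comp ((continuous_const.sub hgcont).prodMk
        continuous_id))))
  · -- x₀ is in the image
    exact ⟨0, ⟨by linarith, hτ₀⟩, x₀, hx₀S, (h0 x₀).symm⟩
end

section
/- Let P : (-δ₀, δ₀) → (-1, 1) be a continuous, strictly decreasing map with P(0) = 0, and suppose P²(t) ≠ t for all t ≠ 0 (where defined) and P²(a) > a for all a ∈ (0, δ₁) for some δ₁ with P((-δ₁,δ₁)) ⊂ (-δ₀,δ₀). Then 0 is a repelling fixed point of P: there exists an interval (a₀, b₀) containing 0 with P⁻¹(a₀,b₀) ⊂ (a₀,b₀) and every orbit of P⁻¹ starting in (a₀,b₀)\{0} converges to 0 under P⁻¹... equivalently, orbits of P leave a neighborhood of 0. -/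
open Set Filter Metric Topology

/-- a decreasing return map with `P² > id` on one side (and no fixed points
of `P²` off `0`) has `0` as a repelling fixed point: orbits of `P` leave a neighborhood. -/
theorem decreasing_return_map_repelling
    (P : ℝ → ℝ) (δ₀ δ₁ : ℝ) (hδ₀ : 0 < δ₀) (hδ₁ : 0 < δ₁) (hδ : δ₁ ≤ δ₀)
    (hPc : ContinuousOn P (Set.Ioo (-δ₀) δ₀))
    (hPanti : StrictAntiOn P (Set.Ioo (-δ₀) δ₀))
    (hrange : Set.MapsTo P (Set.Ioo (-δ₀) δ₀) (Set.Ioo (-1 : ℝ) 1))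
    (hP0 : P 0 = 0)
    (hmaps : Set.MapsTo P (Set.Ioo (-δ₁) δ₁) (Set.Ioo (-δ₀) δ₀))
    (hnofix : ∀ t ∈ Set.Ioo (-δ₁) δ₁, t ≠ 0 → P (P t) ≠ t)
    (hgt : ∀ a ∈ Set.Ioo (0:ℝ) δ₁, P (P a) > a) :
    ∃ a₀ b₀ : ℝ, a₀ < 0 ∧ 0 < b₀ ∧ Set.Ioo a₀ b₀ ⊆ Set.Ioo (-δ₀) δ₀ ∧
      ∀ u : ℕ → ℝ, u 0 ∈ Set.Ioo a₀ b₀ → u 0 ≠ 0 →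
        (∀ n : ℕ, u (n + 1) = P (u n)) → ∃ n : ℕ, u n ∉ Set.Ioo a₀ b₀ := by
  have hsub : Set.Ioo (-δ₁) δ₁ ⊆ Set.Ioo (-δ₀) δ₀ := Set.Ioo_subset_Ioo (by linarith) hδ
  refine ⟨-(δ₁/2), δ₁/2, by linarith, by linarith, ?_, ?_⟩
  · intro x hx
    exact ⟨by linarith [hx.1], by linarith [hx.2]⟩
  intro u hu0 hne hrec
  by_contra hcon
  push_neg at hcon
  -- key lemma: orbit cannot start in (0, δ₁/2)
  have key : ∀ m : ℕ, u m ∈ Set.Ioo (0:ℝ) (δ₁/2) → False := by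
    intro m hm
    set v : ℕ → ℝ := fun k => u (m + 2 * k) with hv
    have hstep : ∀ k, v (k + 1) = P (P (v k)) := by
      intro k
      have : m + 2 * (k + 1) = (m + 2 * k + 1) + 1 := by ring
      simp only [hv, this, hrec]
    have hlt : ∀ k, v k < δ₁ / 2 := fun k => (hcon (m + 2 * k)).2
    have hpos : ∀ k, 0 < v k := by
      intro k
      induction k with
      | zero => simpa [hv] using hm.1
      | succ n ih =>
        have := hgt (v n) ⟨ih, by linarith [hlt n]⟩
        rw [hstep]
        linarith
    have hmono : StrictMono v := by
      apply strictMono_nat_of_lt_succ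
      intro k
      rw [hstep]
      exact hgt (v k) ⟨hpos k, by linarith [hlt k]⟩
    have hbdd : BddAbove (Set.range v) := ⟨δ₁ / 2, by rintro x ⟨k, rfl⟩; exact (hlt k).le⟩
    set L := ⨆ k, v k with hLdef
    have hvL : Tendsto v atTop (nhds L) := tendsto_atTop_ciSup hmono.monotone hbdd
    have hLle : L ≤ δ₁ / 2 := ciSup_le fun k => (hlt k).le
    have hLpos : 0 < L := lt_of_lt_of_le (hpos 0) (le_ciSup hbdd 0)
    have hLmem : L ∈ Set.Ioo (-δ₁) δ₁ := ⟨by linarith, by linarith⟩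
    have hc2 : ContinuousOn (fun x => P (P x)) (Set.Ioo (-δ₁) δ₁) :=
      hPc.comp (hPc.mono hsub) hmaps
    have hvin : ∀ k, v k ∈ Set.Ioo (-δ₁) δ₁ :=
      fun k => ⟨by linarith [hpos k], by linarith [hlt k]⟩
    have hvL' : Tendsto v atTop (nhdsWithin L (Set.Ioo (-δ₁) δ₁)) :=
      tendsto_nhdsWithin_of_tendsto_nhds_of_eventually_within _ hvL
        (Filter.Eventually.of_forall hvin)
    have h1 : Tendsto (fun k => P (P (v k))) atTop (nhds (P (P L))) :=
      ((hc2 L hLmem).tendsto).comp hvL'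
    have h2 : Tendsto (fun k => P (P (v k))) atTop (nhds L) := by
      have : Tendsto (fun k => v (k + 1)) atTop (nhds L) :=
        hvL.comp (tendsto_add_atTop_nat 1)
      simpa [hstep] using this
    exact hnofix L hLmem (ne_of_gt hLpos) (tendsto_nhds_unique h1 h2)
  rcases lt_or_gt_of_ne hne with h0 | h0
  · -- u 0 < 0, so u 1 = P (u 0) > 0
    have hu0m : u 0 ∈ Set.Ioo (-δ₀) δ₀ :=
      ⟨by linarith [hu0.1], by linarith [hu0.2]⟩
    have h0m : (0:ℝ) ∈ Set.Ioo (-δ₀) δ₀ := ⟨by linarith, by linarith⟩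
    have hpos1 : 0 < u 1 := by
      have := hPanti hu0m h0m h0
      rw [hP0] at this
      rw [hrec 0]; exact this
    exact key 1 ⟨hpos1, (hcon 1).2⟩
  · exact key 0 ⟨h0, hu0.2⟩
end

section
/- Let φ be a continuous flow on a compact metric space M with nonwandering set consisting of finitely many critical elements, and suppose φ has the oriented shadowing property. Then φ has no cycles: there is no finite sequence of critical elements Λ₀ ⇀ Λ₁ ⇀ ⋯ ⇀ Λₖ = Λ₀ (k ≥ 1), where Λ ⇀ Λ' means Wᵘ(Λ) ∩ Wˢ(Λ') \ Ω(φ) ≠ ∅. -/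
open Set Filter Metric Topology

/-!
Near a closed orbit or a singularity `Λ`, an orbit converging to `Λ` comes arbitrarily close to
every point of `Λ`, since limit sets are invariant and `Λ` is a single compact orbit. So along a
cycle `Λ₀ ⇀ ⋯ ⇀ Λₖ = Λ₀` with connecting points `x₀, …, xₖ₋₁`, long orbit pieces of `xᵢ` and
`xᵢ₊₁` can be joined by a small jump near a point of `Λᵢ₊₁`. Running around the cycle forever gives
a pseudotrajectory passing through the wandering point `x₀` at arbitrarily late times. A shadowing
orbit, however it is reparametrized, then returns to any neighbourhood of `x₀` after arbitrarily
long times, i.e. `x₀` is nonwandering.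
-/

section

variable {M : Type*}

section LimitSets

variable [PseudoMetricSpace M] {φ : ℝ × M → M} {x y : M}

lemma mem_omegaLim_of_mapClusterPt (hy : MapClusterPt y atTop (fun t => φ (t, x))) :
    y ∈ OmegaLim φ x := by
  intro ε hε T
  obtain ⟨t, ht, hdist⟩ :=
    frequently_atTop.1 ((nhds_basis_ball.mapClusterPt_iff_frequently.1 hy) ε hε) (T + 1)
  exact ⟨t, by linarith, hdist⟩

lemma mem_alphaLim_of_mapClusterPt (hy : MapClusterPt y atBot (fun t => φ (t, x))) :
    y ∈ AlphaLim φ x := by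
  intro ε hε T
  obtain ⟨t, ht, hdist⟩ :=
    frequently_atBot.1 ((nhds_basis_ball.mapClusterPt_iff_frequently.1 hy) ε hε) (T - 1)
  exact ⟨t, by linarith, hdist⟩

end LimitSets

lemma exists_mem_mapClusterPt_of_tendsto_infDist {α X : Type*} [PseudoMetricSpace X]
    [CompactSpace X] {l : Filter α} [l.NeBot] {f : α → X} {K : Set X} (hK : IsClosed K)
    (hKne : K.Nonempty) (hf : Tendsto (fun a => infDist (f a) K) l (𝓝 0)) :
    ∃ y ∈ K, MapClusterPt y l f := by
  obtain ⟨y, -, hy⟩ := isCompact_univ.exists_mapClusterPt (f := l) (u := f) (by simp)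
  refine ⟨y, (hK.mem_iff_infDist_zero hKne).2 ?_, hy⟩
  by_contra hne
  exact (ClusterPt.mono (hy.continuousAt_comp (continuous_infDist_pt K).continuousAt) hf).ne
    (disjoint_nhds_nhds.2 hne).eq_bot

namespace IsFlow

variable [TopologicalSpace M] {φ : ℝ × M → M}

lemma mapClusterPt_flow (hφ : IsFlow φ) {l : Filter ℝ} (hl : ∀ s, Tendsto (s + ·) l l)
    {x y : M} (hy : MapClusterPt y l (fun t => φ (t, x))) (s : ℝ) :
    MapClusterPt (φ (s, y)) l (fun t => φ (t, x)) := by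
  have hcont : Continuous fun z => φ (s, z) := hφ.1.comp (Continuous.prodMk_right s)
  refine .of_comp (hl s) ?_
  convert hy.continuousAt_comp hcont.continuousAt using 1
  exact funext fun t => hφ.2.2 s t x

end IsFlow

namespace IsCriticalElement

variable {φ : ℝ × M → M} {Λ : Set M}

lemma nonempty (hΛ : IsCriticalElement φ Λ) : Λ.Nonempty := by
  rcases hΛ with ⟨p, -, rfl⟩ | ⟨x₀, -, -, -, -, rfl⟩
  exacts [singleton_nonempty p, range_nonempty _]

lemma isCompact [TopologicalSpace M] (hφ : IsFlow φ) (hΛ : IsCriticalElement φ Λ) :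
    IsCompact Λ := by
  rcases hΛ with ⟨p, -, rfl⟩ | ⟨x₀, T, hT, hper, -, rfl⟩
  · exact isCompact_singleton
  · have hperiodic : Function.Periodic (fun t => φ (t, x₀)) T := fun t => by
      simp only [hφ.2.2, hper]
    exact hperiodic.compact_of_continuous hT.ne' (hφ.1.comp (Continuous.prodMk_left x₀))

lemma subset_range_flow [TopologicalSpace M] (hφ : IsFlow φ) (hΛ : IsCriticalElement φ Λ)
    {y : M} (hy : y ∈ Λ) : Λ ⊆ range fun t => φ (t, y) := by
  rcases hΛ with ⟨p, -, rfl⟩ | ⟨x₀, -, -, -, -, rfl⟩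
  · rw [mem_singleton_iff.1 hy, singleton_subset_iff]
    exact ⟨0, hφ.2.1 p⟩
  · obtain ⟨s, rfl⟩ := hy
    rintro - ⟨t, rfl⟩
    exact ⟨t - s, by simp only [← hφ.2.2, sub_add_cancel]⟩

variable [MetricSpace M] [CompactSpace M]

lemma mapClusterPt_of_tendsto_infDist (hφ : IsFlow φ) (hΛ : IsCriticalElement φ Λ)
    {l : Filter ℝ} [l.NeBot] (hl : ∀ s, Tendsto (s + ·) l l) {x : M}
    (hx : Tendsto (fun t => infDist (φ (t, x)) Λ) l (𝓝 0)) {y : M} (hy : y ∈ Λ) :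
    MapClusterPt y l (fun t => φ (t, x)) := by
  obtain ⟨y₀, hy₀, hcluster⟩ :=
    exists_mem_mapClusterPt_of_tendsto_infDist (hΛ.isCompact hφ).isClosed hΛ.nonempty hx
  obtain ⟨s, rfl⟩ := hΛ.subset_range_flow hφ hy₀ hy
  exact hφ.mapClusterPt_flow hl hcluster s

lemma subset_omegaLim (hφ : IsFlow φ) (hΛ : IsCriticalElement φ Λ) {x : M}
    (hx : Tendsto (fun t => infDist (φ (t, x)) Λ) atTop (𝓝 0)) : Λ ⊆ OmegaLim φ x :=
  fun _ hy => mem_omegaLim_of_mapClusterPt <| hΛ.mapClusterPt_of_tendsto_infDist hφ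
    (fun s => tendsto_atTop_add_const_left _ s tendsto_id) hx hy

lemma subset_alphaLim (hφ : IsFlow φ) (hΛ : IsCriticalElement φ Λ) {x : M}
    (hx : Tendsto (fun t => infDist (φ (t, x)) Λ) atBot (𝓝 0)) : Λ ⊆ AlphaLim φ x :=
  fun _ hy => mem_alphaLim_of_mapClusterPt <| hΛ.mapClusterPt_of_tendsto_infDist hφ
    (fun s => tendsto_atBot_add_const_left _ s tendsto_id) hx hy

end IsCriticalElement

lemma IsFlow.exists_dist_flow_lt [PseudoMetricSpace M] [CompactSpace M] {φ : ℝ × M → M}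
    (hφ : IsFlow φ) {K : Set ℝ} (hK : IsCompact K) {d : ℝ} (hd : 0 < d) :
    ∃ δ > 0, ∀ u ∈ K, ∀ x y : M, dist x y < δ → dist (φ (u, x)) (φ (u, y)) < d := by
  obtain ⟨δ, hδ, h⟩ := Metric.uniformContinuousOn_iff.1
    ((hK.prod isCompact_univ).uniformContinuousOn_of_continuous hφ.1.continuousOn) d hd
  refine ⟨δ, hδ, fun u hu x y hxy => h (u, x) ⟨hu, mem_univ x⟩ (u, y) ⟨hu, mem_univ y⟩ ?_⟩
  simpa [Prod.dist_eq] using hxy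

section Gluing

variable {b : ℕ → ℝ} {t : ℝ} {i : ℕ}

lemma add_le_of_add_one_le_succ (hb : ∀ i, b i + 1 ≤ b (i + 1)) (i : ℕ) : b 0 + i ≤ b i := by
  induction i with
  | zero => simp
  | succ i ih => push_cast; linarith [hb i]

/-- The index `i` with `t ∈ [b i, b (i + 1))`, except that it is `0` for every `t < b 1`. -/
noncomputable def segmentIndex (b : ℕ → ℝ) (t : ℝ) : ℕ := sInf {i | t < b (i + 1)}

lemma segmentIndex_eq (hb : Monotone b) (h₀ : i = 0 ∨ b i ≤ t) (h₁ : t < b (i + 1)) :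
    segmentIndex b t = i := by
  refine le_antisymm (Nat.sInf_le h₁) (le_csInf ⟨i, h₁⟩ fun j hj => ?_)
  by_contra! hji
  rcases h₀ with rfl | h₀
  · exact Nat.not_lt_zero j hji
  · exact (hj.trans_le (hb hji)).not_ge h₀

lemma segmentIndex_spec (hb : ∀ i, b i + 1 ≤ b (i + 1)) (t : ℝ) :
    (segmentIndex b t = 0 ∨ b (segmentIndex b t) ≤ t) ∧ t < b (segmentIndex b t + 1) := by
  have hne : {i | t < b (i + 1)}.Nonempty := by
    refine ⟨⌈t - b 0⌉₊, show t < b (⌈t - b 0⌉₊ + 1) from ?_⟩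
    have := add_le_of_add_one_le_succ hb (⌈t - b 0⌉₊ + 1)
    push_cast at this
    linarith [Nat.le_ceil (t - b 0)]
  refine ⟨?_, Nat.sInf_mem hne⟩
  rcases hidx : segmentIndex b t with _ | j
  · exact Or.inl rfl
  · have hj : j < segmentIndex b t := by omega
    exact Or.inr (not_lt.1 (Nat.notMem_of_lt_sInf hj))

variable {φ : ℝ × M → M} {y : ℕ → M}

noncomputable def glueOrbits (φ : ℝ × M → M) (b : ℕ → ℝ) (y : ℕ → M) (t : ℝ) : M :=
  φ (t - b (segmentIndex b t), y (segmentIndex b t))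

lemma glueOrbits_eq (hb : ∀ i, b i + 1 ≤ b (i + 1)) (h₀ : b i ≤ t) (h₁ : t < b (i + 1)) :
    glueOrbits φ b y t = φ (t - b i, y i) := by
  rw [glueOrbits, segmentIndex_eq (monotone_nat_of_le_succ fun i => by linarith [hb i])
    (Or.inr h₀) h₁]

lemma IsFlow.isPseudo_glueOrbits [PseudoMetricSpace M] (hφ : IsFlow φ)
    (hb : ∀ i, b i + 1 ≤ b (i + 1)) {d : ℝ} (hd : 0 < d) (hjump : ∀ i, ∀ u ∈ Icc (0 : ℝ) 1,
      dist (φ (u, y (i + 1))) (φ (u, φ (b (i + 1) - b i, y i))) < d) :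
    IsPseudo φ d (glueOrbits φ b y) := by
  have hmono : Monotone b := monotone_nat_of_le_succ fun i => by linarith [hb i]
  rintro t s ⟨hs₀, hs₁⟩
  obtain ⟨hi₀, hi₁⟩ := segmentIndex_spec hb t
  set i := segmentIndex b t
  have hξt : glueOrbits φ b y t = φ (t - b i, y i) := rfl
  rcases lt_or_ge (t + s) (b (i + 1)) with hts | hts
  · have hidx : segmentIndex b (t + s) = i :=
      segmentIndex_eq hmono (hi₀.imp_right fun h => by linarith) hts
    rw [glueOrbits, hidx, hξt, ← hφ.2.2, add_sub_right_comm, add_comm s, dist_self]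
    exact hd
  · have hidx : segmentIndex b (t + s) = i + 1 :=
      segmentIndex_eq hmono (Or.inr hts) (by linarith [hb (i + 1)])
    have hstep : φ (s, φ (t - b i, y i)) = φ (t + s - b (i + 1), φ (b (i + 1) - b i, y i)) := by
      rw [← hφ.2.2, ← hφ.2.2]
      ring_nf
    rw [glueOrbits, hidx, hξt, hstep]
    exact hjump i _ ⟨by linarith, by linarith⟩

end Gluing

theorem IsFlow.isNonWandering_of_chain [MetricSpace M] [CompactSpace M] {φ : ℝ × M → M}
    (hφ : IsFlow φ) (hsh : OrientedShadowing φ) (x : ℕ → M)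
    (hlink : ∀ i, (OmegaLim φ (x i) ∩ AlphaLim φ (x (i + 1))).Nonempty)
    (hrec : ∀ N, ∃ i ≥ N, x i = x 0) : IsNonWandering φ (x 0) := by
  intro V hV hxV T _
  obtain ⟨ε, hε, hball⟩ := Metric.isOpen_iff.1 hV _ hxV
  obtain ⟨d, hd, hshadow⟩ := hsh ε hε
  obtain ⟨δ, hδ, hunif⟩ := hφ.exists_dist_flow_lt (isCompact_Icc (a := 0) (b := 1)) hd
  choose p hpω hpα using hlink
  choose τ hτ hτp using fun i => hpω i (δ / 2) (half_pos hδ) 1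
  choose σ hσ hσp using fun i => hpα i (δ / 2) (half_pos hδ) 0
  -- The piece through `x i` runs from time `s i ≤ 0` to time `τ i` of its orbit, so that
  -- consecutive pieces meet near `p i`.
  let s : ℕ → ℝ := fun | 0 => 0 | i + 1 => σ i
  have hs : ∀ i, s i ≤ 0 := fun | 0 => le_rfl | i + 1 => (hσ i).le
  let b : ℕ → ℝ := fun i => ∑ j ∈ Finset.range i, (τ j - s j)
  have hb_succ : ∀ i, b (i + 1) = b i + (τ i - s i) := fun i => Finset.sum_range_succ _ _
  have hb : ∀ i, b i + 1 ≤ b (i + 1) := fun i => by linarith [hb_succ i, hτ i, hs i]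
  let ξ := glueOrbits φ b fun i => φ (s i, x i)
  have hξ : ∀ i, ξ (b i - s i) = x i := fun i => by
    refine (glueOrbits_eq hb (by linarith [hs i]) (by linarith [hb_succ i, hτ i])).trans ?_
    rw [← hφ.2.2, show b i - s i - b i + s i = 0 by ring, hφ.2.1]
  have hpseudo : IsPseudo φ d ξ := by
    refine hφ.isPseudo_glueOrbits hb hd fun i u hu => hunif u hu _ _ ?_
    rw [← hφ.2.2, hb_succ, show b i + (τ i - s i) - b i + s i = τ i by ring]
    calc dist (φ (σ i, x (i + 1))) (φ (τ i, x i))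
        ≤ dist (φ (σ i, x (i + 1))) (p i) + dist (φ (τ i, x i)) (p i) := dist_triangle_right _ _ _
      _ < δ / 2 + δ / 2 := add_lt_add (hσp i) (hτp i)
      _ = δ := add_halves δ
  obtain ⟨z, h, ⟨-, hbij, hmono⟩, hz⟩ := hshadow ξ hpseudo
  have hvisit : ∀ j, x j = x 0 → φ (h (b j - s j), z) ∈ V := fun j hj =>
    hball <| by rw [mem_ball, dist_comm, ← hj, ← hξ j]; exact hz _
  obtain ⟨a, ha⟩ := hbij.2 (h (b 0 - s 0) + T)
  obtain ⟨i, hi, hxi⟩ := hrec (⌈a - b 0⌉₊ + 1)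
  have hlate : a < b i - s i := by
    have : (⌈a - b 0⌉₊ + 1 : ℝ) ≤ i := by exact_mod_cast hi
    linarith [Nat.le_ceil (a - b 0), hs i, add_le_of_add_one_le_succ hb i]
  refine ⟨h (b i - s i) - h (b 0 - s 0), by linarith [hmono hlate], _, hvisit 0 rfl, ?_⟩
  rw [← hφ.2.2, sub_add_cancel]
  exact hvisit i hxi

end

lemma Fin.apply_succ_mod_eq_apply_castSucc_succ_mod {α : Type*} {k : ℕ} (hk : 0 < k)
    {f : Fin (k + 1) → α} (hf : f (Fin.last k) = f 0) (i : ℕ) :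
    f (Fin.succ ⟨i % k, Nat.mod_lt i hk⟩) = f (Fin.castSucc ⟨(i + 1) % k, Nat.mod_lt _ hk⟩) := by
  have hle : i % k + 1 ≤ k := Nat.mod_lt i hk
  rcases hle.lt_or_eq with hlt | heq
  · congr 1
    ext
    simp [← Nat.mod_add_mod i k 1, Nat.mod_eq_of_lt hlt]
  · convert hf using 2
    · ext
      exact heq
    · ext
      simp only [Fin.val_castSucc, Fin.val_zero]
      rw [← Nat.mod_add_mod i k 1, heq, Nat.mod_self]

theorem no_cycles_general {M : Type*} [MetricSpace M] [CompactSpace M]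
    (φ : ℝ × M → M) (hφ : IsFlow φ) (hsh : OrientedShadowing φ) :
    ¬ ∃ (k : ℕ) (_ : 1 ≤ k) (Λ : Fin (k + 1) → Set M),
      (∀ i, IsCriticalElement φ (Λ i)) ∧ Λ (Fin.last k) = Λ 0 ∧
      ∀ i : Fin k, ∃ x : M, ¬ IsNonWandering φ x ∧
        Tendsto (fun t => Metric.infDist (φ (t, x)) (Λ i.castSucc)) atBot (nhds 0) ∧
        Tendsto (fun t => Metric.infDist (φ (t, x)) (Λ i.succ)) atTop (nhds 0) := by
  rintro ⟨k, hk, Λ, hΛ, hcycle, hedge⟩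
  choose x hwander hα hω using hedge
  let c : ℕ → Fin k := fun i => ⟨i % k, Nat.mod_lt i hk⟩
  have hlink : ∀ i, (OmegaLim φ (x (c i)) ∩ AlphaLim φ (x (c (i + 1)))).Nonempty := fun i => by
    obtain ⟨p, hp⟩ := (hΛ (c i).succ).nonempty
    refine ⟨p, (hΛ _).subset_omegaLim hφ (hω _) hp, (hΛ _).subset_alphaLim hφ (hα _) ?_⟩
    rwa [← Fin.apply_succ_mod_eq_apply_castSucc_succ_mod hk hcycle]
  have hrec : ∀ N, ∃ i ≥ N, x (c i) = x (c 0) := fun N =>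
    ⟨N * k, Nat.le_mul_of_pos_right N hk, by simp [c, Nat.mul_mod_left]⟩
  exact hwander (c 0) (hφ.isNonWandering_of_chain hsh (fun i => x (c i)) hlink hrec)

/-- a flow with the oriented shadowing property and finitely many
critical elements as nonwandering set has no cycles. -/
theorem no_cycles {M : Type*} [MetricSpace M] [CompactSpace M]
    (φ : ℝ × M → M) (hφ : IsFlow φ) (hsh : OrientedShadowing φ)
    (n : ℕ) (C : Fin n → Set M) (hC : ∀ i, IsCriticalElement φ (C i))
    (hΩ : {x | IsNonWandering φ x} = ⋃ i, C i) :
    ¬ ∃ (k : ℕ) (_ : 1 ≤ k) (Λ : Fin (k + 1) → Set M),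
      (∀ i, IsCriticalElement φ (Λ i)) ∧ Λ (Fin.last k) = Λ 0 ∧
      ∀ i : Fin k, ∃ x : M, ¬ IsNonWandering φ x ∧
        Tendsto (fun t => Metric.infDist (φ (t, x)) (Λ i.castSucc)) atBot (nhds 0) ∧
        Tendsto (fun t => Metric.infDist (φ (t, x)) (Λ i.succ)) atTop (nhds 0) :=
  no_cycles_general φ hφ hsh
end
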